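/- arXiv:0805.1467 — 7 statements merged into one kernel-verified Lean document; each statement's English description precedes it below -/
import Mathlib

section
/- Sylvester's identity holds as formal power series: ∏_{q≥1}(1 + t x^q) = 1 + Σ_{q≥1} t^q x^{(3q²−q)/2} · (1+tx)(1+tx²)···(1+tx^{q−1})(1+tx^{2q}) / ((1−x)(1−x²)···(1−x^q)). -/
/-- A `lam`-partition: a strictly increasing list of positive integers whose
consecutive differences are at least `lam`. -/
def IsLamPartition (lam : ℕ) (l : List ℕ) : Prop :=
  l.Chain' (fun a b => a + lam ≤ b) ∧ ∀ i ∈ l, 0 < i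

/-- A partition into distinct parts: a strictly increasing list of positive integers. -/
def IsDistinctPartition (l : List ℕ) : Prop :=
  l.Chain' (· < ·) ∧ ∀ i ∈ l, 0 < i

/-- Auxiliary: given the previous part `p`, collect the parts starting a new maximal
dense block (i.e. those preceded by a gap `> lam`). -/
def blockStartsAux (lam : ℕ) : ℕ → List ℕ → List ℕ
  | _, [] => []
  | p, a :: t => (if p + lam < a then [a] else []) ++ blockStartsAux lam a t

/-- The smallest parts of the maximal dense blocks of a `lam`-partition. -/
def blockStarts (lam : ℕ) : List ℕ → List ℕ
  | [] => []
  | a :: t => a :: blockStartsAux lam a t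

/-- The leading parts of a `lam`-partition (for `lam ∈ {2,3}`): smallest parts of the
maximal dense blocks of index 1 (for `lam = 3`: smallest part `> 2`; for `lam = 2`:
smallest part odd and `> 1`). -/
def leadingParts (lam : ℕ) (l : List ℕ) : List ℕ :=
  if lam = 2 then (blockStarts 2 l).filter (fun a => decide (1 < a ∧ a % 2 = 1))
  else (blockStarts lam l).filter (fun a => decide (2 < a))

/-- The index of a `lam`-partition: the number of maximal dense blocks of index 1. -/
def lamIndex (lam : ℕ) (l : List ℕ) : ℕ := (leadingParts lam l).length

/-- A marked `lam`-partition: a `lam`-partition together with a set of marked parts,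
which must be a subset of its leading parts. -/
def IsMarked (lam : ℕ) (p : List ℕ × Finset ℕ) : Prop :=
  IsLamPartition lam p.1 ∧ ∀ a ∈ p.2, a ∈ leadingParts lam p.1

/-!
Write `F(t)` for the right-hand side; its `q`-th term with `t` replaced by `t x^r` is
`term t r q`. The functional equation `F(t) = (1 + t x) F(t x)` holds term by term up to a
telescoping remainder (`term_add_remainder`). Iterating it `n` times gives
`F(t) ≡ ∏_{j ≤ n} (1 + t x^j) F(t x^n)` modulo `x^(n+1)`, and `F(t x^n) ≡ 1` modulo `x^(n+1)`
since its `q`-th term is divisible by `x^(q n + (3q² - q)/2)`.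
-/

open PowerSeries Finset

namespace Sylvester

theorem pentagonal_natCast_succ (q : ℕ) :
    pentagonal ((q + 1 : ℕ) : ℤ) = pentagonal (q : ℤ) + (3 * q + 1) := by
  have h₁ := two_mul_natCast_pentagonal ((q + 1 : ℕ) : ℤ)
  have h₀ := two_mul_natCast_pentagonal (q : ℤ)
  push_cast at h₁ ⊢
  zify
  linarith

theorem three_mul_sq_sub_div_two (q : ℕ) : (3 * q ^ 2 - q) / 2 = pentagonal (q : ℤ) := by
  have h := two_mul_natCast_pentagonal (q : ℤ)
  have hq : q ≤ 3 * q ^ 2 := by nlinarith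
  have : 3 * q ^ 2 - q = 2 * pentagonal (q : ℤ) := by
    zify [hq]
    linarith
  omega

theorem le_pentagonal_natCast (q : ℕ) : q ≤ pentagonal (q : ℤ) := by
  induction q with
  | zero => exact Nat.zero_le _
  | succ q ih => rw [pentagonal_natCast_succ]; omega

variable {R : Type*} [CommRing R]

variable (R) in
noncomputable def denomInv (q : ℕ) : R⟦X⟧ :=
  invOfUnit (∏ j ∈ Icc 1 q, (1 - X ^ j)) 1

theorem prod_mul_denomInv (q : ℕ) :
    (∏ j ∈ Icc 1 q, (1 - X ^ j : R⟦X⟧)) * denomInv R q = 1 := by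
  refine mul_invOfUnit _ _ ?_
  rw [map_prod, Units.val_one]
  refine prod_eq_one fun j hj => ?_
  simp [zero_pow (by grind : j ≠ 0)]

theorem denomInv_zero : denomInv R 0 = 1 := by
  simpa using prod_mul_denomInv (R := R) 0

theorem denomInv_eq_mul_denomInv_succ (q : ℕ) :
    denomInv R q = (1 - X ^ (q + 1)) * denomInv R (q + 1) := by
  have hsucc := prod_Icc_succ_top (by omega : 1 ≤ q + 1) fun j => (1 - X ^ j : R⟦X⟧)
  calc denomInv R q
      = denomInv R q * ((∏ j ∈ Icc 1 (q + 1), (1 - X ^ j)) * denomInv R (q + 1)) := by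
        rw [prod_mul_denomInv, mul_one]
    _ = ((∏ j ∈ Icc 1 q, (1 - X ^ j)) * denomInv R q) *
          ((1 - X ^ (q + 1)) * denomInv R (q + 1)) := by
        rw [hsucc]; ring
    _ = (1 - X ^ (q + 1)) * denomInv R (q + 1) := by rw [prod_mul_denomInv, one_mul]

variable (t : R)

noncomputable def shiftedProd (r m : ℕ) : R⟦X⟧ :=
  ∏ j ∈ range m, (1 + C t * X ^ (r + 1 + j))

theorem mul_shiftedProd_succ (r m : ℕ) :
    (1 + C t * X ^ (r + 1)) * shiftedProd t (r + 1) m =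
      shiftedProd t r m * (1 + C t * X ^ (r + 1 + m)) := by
  have hbot :
      shiftedProd t r (m + 1) = shiftedProd t (r + 1) m * (1 + C t * X ^ (r + 1)) := by
    simp only [shiftedProd, prod_range_succ', add_zero]
    ring_nf
  rw [mul_comm, ← hbot, shiftedProd, prod_range_succ]
  rfl

noncomputable def commonFactor (r q : ℕ) : R⟦X⟧ :=
  C (t ^ q) * X ^ (pentagonal (q : ℤ) + q * r) * shiftedProd t r (q - 1)

noncomputable def term (r q : ℕ) : R⟦X⟧ :=
  commonFactor t r q * (1 + C t * X ^ (2 * q + r)) * denomInv R q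

noncomputable def remainder (r q : ℕ) : R⟦X⟧ :=
  commonFactor t r q * denomInv R (q - 1)

theorem term_add_remainder (r q : ℕ) :
    term t r (q + 1) + remainder t r (q + 2) =
      (1 + C t * X ^ (r + 1)) * term t (r + 1) (q + 1) + remainder t r (q + 1) := by
  have hswap := mul_shiftedProd_succ t r q
  simp only [term, remainder, commonFactor, show q + 2 = q + 1 + 1 from rfl,
    pentagonal_natCast_succ, Nat.add_sub_cancel, shiftedProd, prod_range_succ,
    denomInv_eq_mul_denomInv_succ q, map_pow]
  simp only [shiftedProd] at hswap
  linear_combination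
    (-(C t ^ (q + 1) * X ^ (pentagonal (q : ℤ) + (3 * q + 1) + (q + 1) * r + (q + 1)) *
      (1 + C t * X ^ (2 * (q + 1) + r + 1)) * denomInv R (q + 1))) * hswap

theorem term_zero (q : ℕ) :
    term t 0 q = C (t ^ q) * X ^ ((3 * q ^ 2 - q) / 2) *
      (∏ j ∈ Icc 1 (q - 1), (1 + C t * X ^ j)) * (1 + C t * X ^ (2 * q)) *
        invOfUnit (∏ j ∈ Icc 1 q, (1 - X ^ j)) 1 := by
  rw [term, commonFactor, shiftedProd, three_mul_sq_sub_div_two, ← Ico_add_one_right_eq_Icc,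
    prod_Ico_eq_prod_range, mul_zero, add_zero, add_zero, Nat.add_sub_cancel, denomInv]

theorem one_add_sum_term_eq (r n : ℕ) :
    1 + ∑ q ∈ Icc 1 n, term t r q =
      (1 + C t * X ^ (r + 1)) * (1 + ∑ q ∈ Icc 1 n, term t (r + 1) q) -
        remainder t r (n + 1) := by
  induction n with
  | zero =>
    simp [remainder, commonFactor, shiftedProd, denomInv_zero, pentagonal_def, add_comm r]
  | succ n ih =>
    rw [sum_Icc_succ_top (by omega), sum_Icc_succ_top (by omega)]
    linear_combination ih + term_add_remainder t r n

theorem one_add_sum_term_zero_eq (n m : ℕ) :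
    1 + ∑ q ∈ Icc 1 n, term t 0 q =
      (∏ j ∈ Icc 1 m, (1 + C t * X ^ j)) * (1 + ∑ q ∈ Icc 1 n, term t m q) -
        ∑ r ∈ range m, (∏ j ∈ Icc 1 r, (1 + C t * X ^ j)) * remainder t r (n + 1) := by
  induction m with
  | zero => simp
  | succ m ih =>
    rw [prod_Icc_succ_top (by omega), sum_range_succ]
    linear_combination ih + (∏ j ∈ Icc 1 m, (1 + C t * X ^ j)) * one_add_sum_term_eq t m n

theorem X_pow_dvd_commonFactor {k r q : ℕ} (h : k ≤ pentagonal (q : ℤ) + q * r) :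
    X ^ k ∣ commonFactor t r q :=
  dvd_mul_of_dvd_left (dvd_mul_of_dvd_right (pow_dvd_pow X h) _) _

theorem X_pow_succ_dvd_prod_sub_one_add_sum_term (n : ℕ) :
    X ^ (n + 1) ∣ ∏ j ∈ Icc 1 n, (1 + C t * X ^ j) - (1 + ∑ q ∈ Icc 1 n, term t 0 q) := by
  have hterm : ∀ q ∈ Icc 1 n, X ^ (n + 1) ∣ term t n q := fun q hq => by
    have hq := (mem_Icc.mp hq).1
    have hpent := le_pentagonal_natCast q
    have hqn : n ≤ q * n := Nat.le_mul_of_pos_left n hq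
    exact dvd_mul_of_dvd_left (dvd_mul_of_dvd_left (X_pow_dvd_commonFactor t (by omega)) _) _
  have hrem : ∀ r ∈ range n, X ^ (n + 1) ∣ remainder t r (n + 1) := fun r _ =>
    dvd_mul_of_dvd_left
      (X_pow_dvd_commonFactor t ((le_pentagonal_natCast _).trans (Nat.le_add_right _ _))) _
  rw [one_add_sum_term_zero_eq t n n, mul_add, mul_one, sub_sub_eq_add_sub,
    add_sub_add_left_eq_sub]
  exact dvd_sub (dvd_sum fun r hr => dvd_mul_of_dvd_right (hrem r hr) _)
    (dvd_mul_of_dvd_right (dvd_sum hterm) _)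

end Sylvester

/-- Sylvester's identity
`∏_{q≥1}(1+tx^q) = 1 + Σ_{q≥1} t^q x^{(3q²−q)/2} (1+tx)⋯(1+tx^{q−1})(1+tx^{2q}) /
((1−x)⋯(1−x^q))`, stated coefficientwise in `x` over `Polynomial ℤ` (the variable `t`
is `Polynomial.X`); division means multiplication by the formal inverse, and factors or
terms that cannot contribute to the coefficient of `x^n` are omitted. -/
theorem stmt_6 (n : ℕ) :
    PowerSeries.coeff (R := Polynomial ℤ) n
        (∏ q ∈ Finset.Icc 1 n,
          (1 + PowerSeries.C (R := Polynomial ℤ) Polynomial.X *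
            (PowerSeries.X : PowerSeries (Polynomial ℤ)) ^ q)) =
      PowerSeries.coeff (R := Polynomial ℤ) n
        (1 + ∑ q ∈ Finset.Icc 1 n,
          PowerSeries.C (R := Polynomial ℤ) (Polynomial.X ^ q) *
            (PowerSeries.X : PowerSeries (Polynomial ℤ)) ^ ((3 * q ^ 2 - q) / 2) *
            (∏ j ∈ Finset.Icc 1 (q - 1),
              (1 + PowerSeries.C (R := Polynomial ℤ) Polynomial.X * PowerSeries.X ^ j)) *
            (1 + PowerSeries.C (R := Polynomial ℤ) Polynomial.X * PowerSeries.X ^ (2 * q)) *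
            PowerSeries.invOfUnit
              (∏ j ∈ Finset.Icc 1 q,
                (1 - (PowerSeries.X : PowerSeries (Polynomial ℤ)) ^ j)) 1) := by
  simp_rw [← Sylvester.term_zero]
  rw [← sub_eq_zero, ← map_sub]
  exact X_pow_dvd_iff.mp (Sylvester.X_pow_succ_dvd_prod_sub_one_add_sum_term _ n) n
    n.lt_succ_self
end

section
/- The number of 2-partitions of n with q parts and index 0 equals the coefficient of t^q x^n in the formal power series ∏_{s≥1}(1 + t x^{2s}) · (1 + Σ_{r≥1} t^r x^{r²} / ((1+tx²)(1+tx⁴)···(1+tx^{2r}))). -/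
/-!
Inside a dense block of a 2-partition all parts have the same parity, and index 0 forces
every block to start at 1 or at an even part. Hence a 2-partition of index 0 is
`{1, 3, …, 2r - 1} ∪ {2s | s ∈ S}` for a unique `r` and a unique set `S` of integers `> r`;
it has `r + |S|` parts summing to `r² + 2 ∑ S`. Summing `t^r x^{r²} ∏_{s > r} (1 + t x^{2s})`
over `r` gives the series, because `∏_{s > r} = ∏_{s ≥ 1} / ∏_{s ≤ r}`.
-/

lemma List.IsChain.pairwise_add_le {d : ℕ} {l : List ℕ}
    (h : l.IsChain fun a b => a + d ≤ b) : l.Pairwise fun a b => a + d ≤ b :=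
  have : Trans (fun a b : ℕ => a + d ≤ b) (fun a b => a + d ≤ b) (fun a b => a + d ≤ b) :=
    ⟨fun h₁ h₂ => by omega⟩
  h.pairwise

lemma isLamPartition_iff_pairwise {lam : ℕ} {l : List ℕ} :
    IsLamPartition lam l ↔ l.Pairwise (fun a b => a + lam ≤ b) ∧ ∀ i ∈ l, 0 < i :=
  and_congr_left' ⟨List.IsChain.pairwise_add_le, List.Pairwise.isChain⟩

section BlockStarts

variable {lam : ℕ}

lemma blockStartsAux_cons_of_le {p a : ℕ} (t : List ℕ) (h : a ≤ p + lam) :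
    blockStartsAux lam p (a :: t) = blockStartsAux lam a t := by
  simp [blockStartsAux, Nat.not_lt.2 h]

lemma blockStartsAux_cons_of_lt {p a : ℕ} (t : List ℕ) (h : p + lam < a) :
    blockStartsAux lam p (a :: t) = a :: blockStartsAux lam a t := by
  simp [blockStartsAux, h]

lemma mem_of_mem_blockStartsAux {p a : ℕ} {t : List ℕ} (h : a ∈ blockStartsAux lam p t) :
    a ∈ t := by
  induction t generalizing p with
  | nil => simp [blockStartsAux] at h
  | cons b t ih =>
    rcases le_or_gt b (p + lam) with hb | hb
    · rw [blockStartsAux_cons_of_le t hb] at h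
      exact List.mem_cons_of_mem _ (ih h)
    · rw [blockStartsAux_cons_of_lt t hb, List.mem_cons] at h
      exact h.imp_right ih |> List.mem_cons.2

lemma mem_of_mem_blockStarts {a : ℕ} {l : List ℕ} (h : a ∈ blockStarts lam l) : a ∈ l := by
  cases l with
  | nil => simp [blockStarts] at h
  | cons b t =>
    rw [blockStarts, List.mem_cons] at h
    exact h.imp_right mem_of_mem_blockStartsAux |> List.mem_cons.2

lemma blockStartsAux_range'_append (p m : ℕ) (e : List ℕ) :
    blockStartsAux lam p (List.range' (p + lam) m lam ++ e) =
      blockStartsAux lam (p + lam * m) e := by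
  induction m generalizing p with
  | zero => simp
  | succ m ih =>
    rw [List.range'_succ, List.cons_append, blockStartsAux_cons_of_le _ le_rfl, ih]
    congr 1
    ring

end BlockStarts

lemma lamIndex_two_eq_zero_iff {l : List ℕ} :
    lamIndex 2 l = 0 ↔ ∀ a ∈ blockStarts 2 l, a = 1 ∨ Even a := by
  simp only [lamIndex, leadingParts, if_pos, List.length_eq_zero_iff, List.filter_eq_nil_iff,
    decide_eq_true_eq, Nat.even_iff]
  exact forall₂_congr fun a _ => by omega

def evenParts (S : Finset ℕ) : List ℕ := (S.sort (· ≤ ·)).map (2 * ·)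

section EvenParts

variable {S : Finset ℕ}

lemma mem_evenParts {x : ℕ} : x ∈ evenParts S ↔ ∃ s ∈ S, 2 * s = x := by
  simp [evenParts]

lemma two_mul_mem_evenParts {s : ℕ} : 2 * s ∈ evenParts S ↔ s ∈ S := by
  simp [mem_evenParts]

lemma sum_evenParts : (evenParts S).sum = 2 * ∑ s ∈ S, s := by
  rw [evenParts, List.sum_map_mul_left, List.map_id', (Finset.sort_perm_toList S _).sum_eq,
    Finset.sum_toList]

lemma length_evenParts : (evenParts S).length = S.card := by
  simp [evenParts]

lemma pairwise_evenParts : (evenParts S).Pairwise fun a b => a + 2 ≤ b := by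
  rw [evenParts, List.pairwise_map]
  exact (List.sortedLT_iff_pairwise.1 (Finset.sortedLT_sort S)).imp fun h => by omega

end EvenParts

lemma exists_evenParts_eq {l : List ℕ} (hl : l.Pairwise (· < ·)) (heven : ∀ x ∈ l, Even x) :
    ∃ S, evenParts S = l := by
  have halves : (l.map (· / 2)).Pairwise (· < ·) := by
    rw [List.pairwise_map]
    refine hl.imp_of_mem fun ha hb hab => ?_
    obtain ⟨_, rfl⟩ := heven _ ha
    obtain ⟨_, rfl⟩ := heven _ hb
    omega
  refine ⟨(l.map (· / 2)).toFinset, ?_⟩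
  rw [evenParts, (List.toFinset_sort _ halves.nodup).2 (halves.imp le_of_lt), List.map_map]
  conv_rhs => rw [← List.map_id l]
  refine List.map_congr_left fun x hx => ?_
  obtain ⟨_, rfl⟩ := heven x hx
  simp
  omega

def zeroIndexPartition (r : ℕ) (S : Finset ℕ) : List ℕ := List.range' 1 r 2 ++ evenParts S

lemma sum_range'_one_two (r : ℕ) : (List.range' 1 r 2).sum = r ^ 2 := by
  induction r with
  | zero => simp
  | succ r ih => rw [List.range'_concat, List.sum_append, ih]; simp; ring

lemma sum_zeroIndexPartition (r : ℕ) (S : Finset ℕ) :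
    (zeroIndexPartition r S).sum = r ^ 2 + 2 * ∑ s ∈ S, s := by
  rw [zeroIndexPartition, List.sum_append, sum_range'_one_two, sum_evenParts]

lemma length_zeroIndexPartition (r : ℕ) (S : Finset ℕ) :
    (zeroIndexPartition r S).length = r + S.card := by
  rw [zeroIndexPartition, List.length_append, List.length_range', length_evenParts]

lemma isLamPartition_zeroIndexPartition {r : ℕ} {S : Finset ℕ} (hS : ∀ s ∈ S, r < s) :
    IsLamPartition 2 (zeroIndexPartition r S) := by
  have hodd : (List.range' 1 r 2).Pairwise fun a b => a + 2 ≤ b :=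
    ((List.isChain_range' 1 r 2).imp fun _ _ h => h.ge).pairwise_add_le
  rw [isLamPartition_iff_pairwise, zeroIndexPartition, List.pairwise_append]
  refine ⟨⟨hodd, pairwise_evenParts, fun a ha b hb => ?_⟩, fun i hi => ?_⟩
  · obtain ⟨i, hi, rfl⟩ := List.mem_range'.1 ha
    obtain ⟨s, hs, rfl⟩ := mem_evenParts.1 hb
    have := hS s hs
    omega
  · rcases List.mem_append.1 hi with hi | hi
    · obtain ⟨i, -, rfl⟩ := List.mem_range'.1 hi
      omega
    · obtain ⟨s, hs, rfl⟩ := mem_evenParts.1 hi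
      have := hS s hs
      omega

lemma lamIndex_zeroIndexPartition (r : ℕ) (S : Finset ℕ) :
    lamIndex 2 (zeroIndexPartition r S) = 0 := by
  rw [lamIndex_two_eq_zero_iff]
  intro a ha
  cases r with
  | zero =>
    rw [zeroIndexPartition, List.range'_zero, List.nil_append] at ha
    obtain ⟨s, -, rfl⟩ := mem_evenParts.1 (mem_of_mem_blockStarts ha)
    exact .inr (even_two_mul s)
  | succ m =>
    rw [zeroIndexPartition, List.range'_succ, List.cons_append, blockStarts,
      blockStartsAux_range'_append, List.mem_cons] at ha
    refine ha.imp id fun ha => ?_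
    obtain ⟨s, -, rfl⟩ := mem_evenParts.1 (mem_of_mem_blockStartsAux ha)
    exact even_two_mul s

lemma zeroIndexPartition_inj {r r' : ℕ} {S S' : Finset ℕ} :
    zeroIndexPartition r S = zeroIndexPartition r' S' ↔ r = r' ∧ S = S' := by
  refine ⟨fun h => ?_, by rintro ⟨rfl, rfl⟩; rfl⟩
  have odd_parts (r : ℕ) (S : Finset ℕ) :
      (zeroIndexPartition r S).filter (fun x => x % 2 = 1) = List.range' 1 r 2 := by
    rw [zeroIndexPartition, List.filter_append, List.filter_eq_self.2, List.filter_eq_nil_iff.2,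
      List.append_nil]
    · intro x hx
      obtain ⟨s, -, rfl⟩ := mem_evenParts.1 hx
      simp
    · intro x hx
      obtain ⟨i, -, rfl⟩ := List.mem_range'.1 hx
      simp
  have hr : r = r' := by
    have := congrArg (fun l => (l.filter (fun x => x % 2 = 1)).length) h
    simpa only [odd_parts, List.length_range'] using this
  subst hr
  have hS : evenParts S = evenParts S' := List.append_cancel_left h
  exact ⟨rfl, Finset.ext fun s => by rw [← two_mul_mem_evenParts, hS, two_mul_mem_evenParts]⟩

lemma even_and_le_of_mem_cons_range'_append {a m x : ℕ} {e : List ℕ} (ha : Even a)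
    (he : ∀ y ∈ e, Even y ∧ a < y) (hx : x ∈ a :: (List.range' (a + 2) m 2 ++ e)) :
    Even x ∧ a ≤ x := by
  simp only [List.mem_cons, List.mem_append, List.mem_range'] at hx
  rcases hx with rfl | ⟨i, -, rfl⟩ | hx
  · exact ⟨ha, le_rfl⟩
  · exact ⟨by simpa [parity_simps] using ha, by omega⟩
  · exact (he x hx).imp_right le_of_lt

lemma exists_eq_range'_append_of_blockStartsAux {p : ℕ} {t : List ℕ}
    (hchain : (p :: t).IsChain fun a b => a + 2 ≤ b)
    (hstarts : ∀ a ∈ blockStartsAux 2 p t, a = 1 ∨ Even a) :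
    ∃ m e, t = List.range' (p + 2) m 2 ++ e ∧ ∀ x ∈ e, Even x ∧ p + 2 * m + 2 < x := by
  induction t generalizing p with
  | nil => exact ⟨0, [], by simp, by simp⟩
  | cons a t ih =>
    obtain ⟨hpa, htail⟩ := List.isChain_cons_cons.1 hchain
    rcases hpa.eq_or_lt with rfl | hpa
    · rw [blockStartsAux_cons_of_le t le_rfl] at hstarts
      obtain ⟨m, e, rfl, he⟩ := ih htail hstarts
      exact ⟨m + 1, e, by rw [List.range'_succ]; rfl,
        fun x hx => (he x hx).imp_right fun h => by omega⟩
    · rw [blockStartsAux_cons_of_lt t hpa, List.forall_mem_cons] at hstarts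
      have ha : Even a := hstarts.1.resolve_left (by omega)
      obtain ⟨m, e, rfl, he⟩ := ih htail hstarts.2
      refine ⟨0, a :: (List.range' (a + 2) m 2 ++ e), by simp, fun x hx => ?_⟩
      have := even_and_le_of_mem_cons_range'_append ha
        (fun y hy => (he y hy).imp_right fun h => by omega) hx
      exact ⟨this.1, by omega⟩

lemma exists_eq_zeroIndexPartition {l : List ℕ} (hl : IsLamPartition 2 l)
    (h0 : lamIndex 2 l = 0) : ∃ r S, (∀ s ∈ S, r < s) ∧ l = zeroIndexPartition r S := by
  have split : ∃ r e, l = List.range' 1 r 2 ++ e ∧ ∀ x ∈ e, Even x ∧ 2 * r < x := by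
    rcases l with _ | ⟨a, t⟩
    · exact ⟨0, [], by simp, by simp⟩
    rw [lamIndex_two_eq_zero_iff, blockStarts, List.forall_mem_cons] at h0
    obtain ⟨m, e, rfl, he⟩ := exists_eq_range'_append_of_blockStartsAux hl.1 h0.2
    rcases h0.1 with rfl | ha
    · exact ⟨m + 1, e, by rw [List.range'_succ]; rfl,
        fun x hx => (he x hx).imp_right fun h => by omega⟩
    · refine ⟨0, a :: (List.range' (a + 2) m 2 ++ e), by simp, fun x hx => ⟨?_, hl.2 x hx⟩⟩
      exact (even_and_le_of_mem_cons_range'_append ha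
        (fun y hy => (he y hy).imp_right fun h => by omega) hx).1
  obtain ⟨r, e, rfl, he⟩ := split
  have hsorted : e.Pairwise (· < ·) :=
    ((isLamPartition_iff_pairwise.1 hl).1.sublist (List.sublist_append_right _ _)).imp
      fun h => by omega
  obtain ⟨S, rfl⟩ := exists_evenParts_eq hsorted fun x hx => (he x hx).1
  refine ⟨r, S, fun s hs => ?_, rfl⟩
  have := (he _ (two_mul_mem_evenParts.2 hs)).2
  omega

def zeroIndexParams (n q : ℕ) : Finset (Σ _ : ℕ, Finset ℕ) :=
  (Finset.Icc 0 n).sigma fun r => (Finset.Icc (r + 1) n).powerset.filter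
    fun S => n = r ^ 2 + 2 * ∑ s ∈ S, s ∧ q = r + S.card

lemma setOf_lamIndex_eq_zero_eq_image (n q : ℕ) :
    {l : List ℕ | IsLamPartition 2 l ∧ l.sum = n ∧ l.length = q ∧ lamIndex 2 l = 0} =
      (zeroIndexParams n q).image fun p => zeroIndexPartition p.1 p.2 := by
  ext l
  simp only [zeroIndexParams, Set.mem_setOf_eq, Finset.coe_image, Set.mem_image, Finset.mem_coe,
    Finset.mem_sigma, Finset.mem_Icc, Finset.mem_filter, Finset.mem_powerset, Finset.subset_iff,
    Sigma.exists]
  constructor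
  · rintro ⟨hl, rfl, rfl, h0⟩
    obtain ⟨r, S, hS, rfl⟩ := exists_eq_zeroIndexPartition hl h0
    have hsum := sum_zeroIndexPartition r S
    have hr : r ≤ r ^ 2 := Nat.le_self_pow two_ne_zero r
    refine ⟨r, S, ⟨⟨Nat.zero_le r, by omega⟩, fun s hs => ⟨hS s hs, ?_⟩, hsum,
      length_zeroIndexPartition r S⟩, rfl⟩
    have := Finset.single_le_sum (fun i _ => Nat.zero_le i) hs
    omega
  · rintro ⟨r, S, ⟨-, hS, rfl, rfl⟩, rfl⟩
    exact ⟨isLamPartition_zeroIndexPartition fun s hs => (hS hs).1,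
      sum_zeroIndexPartition r S, length_zeroIndexPartition r S, lamIndex_zeroIndexPartition r S⟩

lemma ncard_setOf_lamIndex_eq_zero (n q : ℕ) :
    {l : List ℕ | IsLamPartition 2 l ∧ l.sum = n ∧ l.length = q ∧ lamIndex 2 l = 0}.ncard =
      ∑ r ∈ Finset.Icc 0 n, ((Finset.Icc (r + 1) n).powerset.filter
        fun S => n = r ^ 2 + 2 * ∑ s ∈ S, s ∧ q = r + S.card).card := by
  rw [setOf_lamIndex_eq_zero_eq_image, Set.ncard_coe_finset, Finset.card_image_of_injOn,
    zeroIndexParams, Finset.card_sigma]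
  rintro ⟨r, S⟩ - ⟨r', S'⟩ - h
  obtain ⟨rfl, rfl⟩ := zeroIndexPartition_inj.1 h
  rfl

section PowerSeriesIdentity

open PowerSeries Finset

variable {R : Type*} [CommRing R]

noncomputable def evenFactor (c : R) (s : ℕ) : PowerSeries R := 1 + C c * X ^ (2 * s)

lemma prod_evenFactor (c : R) (s : Finset ℕ) :
    ∏ j ∈ s, evenFactor c j =
      ∑ T ∈ s.powerset, C (c ^ T.card) * X ^ (2 * ∑ j ∈ T, j) := by
  refine (prod_one_add s).trans (sum_congr rfl fun T _ => ?_)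
  rw [prod_mul_distrib, prod_const, ← map_pow, prod_pow_eq_pow_sum, mul_sum]

lemma constantCoeff_prod_evenFactor (c : R) (r : ℕ) :
    constantCoeff (∏ j ∈ Icc 1 r, evenFactor c j) = 1 := by
  rw [map_prod]
  refine prod_eq_one fun j hj => ?_
  simp [evenFactor, zero_pow (by grind : 2 * j ≠ 0)]

lemma prod_evenFactor_Icc_one_eq_mul {r n : ℕ} (c : R) (h : r ≤ n) :
    ∏ s ∈ Icc 1 n, evenFactor c s =
      (∏ s ∈ Icc 1 r, evenFactor c s) * ∏ s ∈ Icc (r + 1) n, evenFactor c s := by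
  simpa only [← Icc_add_one_left_eq_Ioc, zero_add] using
    (prod_Ioc_consecutive (evenFactor c) (Nat.zero_le r) h).symm

lemma prod_evenFactor_mul_one_add_sum (c : R) (n : ℕ) :
    (∏ s ∈ Icc 1 n, evenFactor c s) *
        (1 + ∑ r ∈ Icc 1 n, C (c ^ r) * X ^ (r ^ 2) *
          invOfUnit (∏ j ∈ Icc 1 r, evenFactor c j) 1) =
      ∑ r ∈ Icc 0 n, C (c ^ r) * X ^ (r ^ 2) * ∏ s ∈ Icc (r + 1) n, evenFactor c s := by
  have term (r : ℕ) (hr : r ∈ Icc 1 n) :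
      (∏ s ∈ Icc 1 n, evenFactor c s) *
          (C (c ^ r) * X ^ (r ^ 2) * invOfUnit (∏ j ∈ Icc 1 r, evenFactor c j) 1) =
        C (c ^ r) * X ^ (r ^ 2) * ∏ s ∈ Icc (r + 1) n, evenFactor c s := by
    have hinv := mul_invOfUnit (∏ j ∈ Icc 1 r, evenFactor c j) 1
      (by rw [constantCoeff_prod_evenFactor, Units.val_one])
    rw [prod_evenFactor_Icc_one_eq_mul c (mem_Icc.1 hr).2]
    linear_combination (C (c ^ r) * X ^ (r ^ 2) * ∏ s ∈ Icc (r + 1) n, evenFactor c s) * hinv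
  rw [mul_add, mul_one, mul_sum, sum_congr rfl term,
    ← insert_Icc_add_one_left_eq_Icc (Nat.zero_le n), sum_insert (by simp)]
  simp

lemma coeff_coeff_C_X_pow_mul_X_pow (n q a b : ℕ) :
    (coeff n (C (Polynomial.X ^ a : Polynomial R) * X ^ b)).coeff q =
      if n = b ∧ q = a then 1 else 0 := by
  rw [coeff_C_mul_X_pow]
  split_ifs <;> simp_all [Polynomial.coeff_X_pow]

lemma coeff_coeff_sum_mul_prod_evenFactor (n q : ℕ) :
    (coeff n (∑ r ∈ Icc 0 n, C (Polynomial.X ^ r : Polynomial R) * X ^ (r ^ 2) *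
        ∏ s ∈ Icc (r + 1) n, evenFactor Polynomial.X s)).coeff q =
      ∑ r ∈ Icc 0 n, (((Icc (r + 1) n).powerset.filter
        fun S => n = r ^ 2 + 2 * ∑ s ∈ S, s ∧ q = r + S.card).card : R) := by
  rw [map_sum, Polynomial.finsetSum_coeff]
  refine sum_congr rfl fun r _ => ?_
  rw [prod_evenFactor, mul_sum, map_sum, Polynomial.finsetSum_coeff, ← sum_boole]
  refine sum_congr rfl fun T _ => ?_
  rw [mul_mul_mul_comm, ← map_mul, ← pow_add, ← pow_add, coeff_coeff_C_X_pow_mul_X_pow]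

end PowerSeriesIdentity

/-- the number of 2-partitions of `n` with `q` parts and index 0 equals
the coefficient of `t^q x^n` in
`∏_{s≥1}(1+tx^{2s})·(1 + Σ_{r≥1} t^r x^{r²}/((1+tx²)⋯(1+tx^{2r})))`, stated over
`Polynomial ℤ` (`t` is `Polynomial.X`); factors and terms that cannot contribute to the
coefficient of `x^n` are omitted. -/
theorem stmt_9 (n q : ℕ) :
    ({l : List ℕ | IsLamPartition 2 l ∧ l.sum = n ∧ l.length = q ∧
        lamIndex 2 l = 0}.ncard : ℤ) =
      (PowerSeries.coeff (R := Polynomial ℤ) n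
        ((∏ s ∈ Finset.Icc 1 n,
            (1 + PowerSeries.C (R := Polynomial ℤ) Polynomial.X *
              (PowerSeries.X : PowerSeries (Polynomial ℤ)) ^ (2 * s))) *
          (1 + ∑ r ∈ Finset.Icc 1 n,
            PowerSeries.C (R := Polynomial ℤ) (Polynomial.X ^ r) * PowerSeries.X ^ (r ^ 2) *
              PowerSeries.invOfUnit
                (∏ j ∈ Finset.Icc 1 r,
                  (1 + PowerSeries.C (R := Polynomial ℤ) Polynomial.X *
                    PowerSeries.X ^ (2 * j))) 1))).coeff q := by
  rw [ncard_setOf_lamIndex_eq_zero, Nat.cast_sum, ← coeff_coeff_sum_mul_prod_evenFactor,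
    ← prod_evenFactor_mul_one_add_sum]
  rfl
end

section
/- A 3-partition of index 0 with q parts is exactly one of the two dense partitions (1, 4, 7, ..., 1+3(q−1)) or (2, 5, 8, ..., 2+3(q−1)); consequently, the degrees of 3-partitions of index 0 of length q are exactly the pentagonal numbers (3q²−q)/2 and (3q²+q)/2. -/
/-! In a 3-partition with first part `a ≥ 1`, every later block starts above `a + 3 > 2`. So the
index vanishes exactly when `a ≤ 2` and the whole partition is one dense block
`a, a + 3, a + 6, …`, whose sum `q a + 3 q (q - 1) / 2` is a pentagonal number for `a = 1, 2`. -/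

theorem List.map_range_eq_range' (c d n : ℕ) :
    (List.range n).map (fun i => c + d * i) = List.range' c n d :=
  List.ext_getElem (by simp) (by simp)

section BlockStarts

variable {lam : ℕ}

theorem lt_of_mem_blockStartsAux {a x : ℕ} {t : List ℕ}
    (ht : (a :: t).IsChain (fun x y => x + lam ≤ y)) (hx : x ∈ blockStartsAux lam a t) :
    a + lam < x := by
  induction t generalizing a with
  | nil => simp [blockStartsAux] at hx
  | cons b t ih =>
    rw [List.isChain_cons_cons] at ht
    simp only [blockStartsAux, List.mem_append] at hx
    rcases hx with hx | hx
    · split_ifs at hx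
      · simp_all
      · simp at hx
    · have := ih ht.2 hx
      omega

theorem blockStartsAux_eq_nil_iff {a : ℕ} {t : List ℕ}
    (ht : (a :: t).IsChain (fun x y => x + lam ≤ y)) :
    blockStartsAux lam a t = [] ↔ a :: t = List.range' a (t.length + 1) lam := by
  induction t generalizing a with
  | nil => simp [blockStartsAux]
  | cons b t ih =>
    rw [List.isChain_cons_cons] at ht
    have hb : (if a + lam < b then [b] else []) = [] ↔ b = a + lam := by
      split_ifs <;> simp <;> omega
    simp only [blockStartsAux, List.append_eq_nil_iff, ih ht.2, hb, List.length_cons,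
      List.range'_succ, List.cons.injEq, true_and]
    constructor <;> rintro ⟨rfl, h⟩ <;> exact ⟨rfl, h⟩

theorem isChain_range'_add_le (c n : ℕ) :
    (List.range' c n lam).IsChain (fun x y => x + lam ≤ y) :=
  (List.isChain_range' c n lam).imp fun _ _ h => h.ge

theorem isLamPartition_range' {c : ℕ} (hc : 0 < c) (n : ℕ) :
    IsLamPartition lam (List.range' c n lam) := by
  refine ⟨isChain_range'_add_le c n, fun i hi => ?_⟩
  obtain ⟨j, -, rfl⟩ := List.mem_range'.1 hi
  omega

end BlockStarts

theorem lamIndex_three_cons_eq_zero_iff {a : ℕ} {t : List ℕ}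
    (h : (a :: t).IsChain (fun x y => x + 3 ≤ y)) :
    lamIndex 3 (a :: t) = 0 ↔ a ≤ 2 ∧ blockStartsAux 3 a t = [] := by
  have hlater : ∀ x ∈ blockStartsAux 3 a t, 2 < x := fun x hx => by
    have := lt_of_mem_blockStartsAux h hx
    omega
  simp only [lamIndex, leadingParts, if_neg (by norm_num : (3 : ℕ) ≠ 2), blockStarts,
    List.length_eq_zero_iff, List.filter_eq_nil_iff, List.mem_cons, forall_eq_or_imp,
    decide_eq_true_eq, not_lt]
  refine and_congr_right fun _ => ⟨fun hle => ?_, fun hnil x hx => by simp [hnil] at hx⟩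
  exact List.eq_nil_iff_forall_not_mem.2 fun x hx => (hle x hx).not_gt (hlater x hx)

theorem lamIndex_three_range'_eq_zero {c : ℕ} (hc : c ≤ 2) (n : ℕ) :
    lamIndex 3 (List.range' c n 3) = 0 := by
  cases n with
  | zero => rfl
  | succ n =>
    have hchain := isChain_range'_add_le c (n + 1) (lam := 3)
    rw [List.range'_succ] at hchain ⊢
    rw [lamIndex_three_cons_eq_zero_iff hchain, blockStartsAux_eq_nil_iff hchain,
      List.length_range']
    exact ⟨hc, rfl⟩

theorem isLamPartition_three_length_lamIndex_eq_zero_iff (l : List ℕ) (q : ℕ) :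
    IsLamPartition 3 l ∧ l.length = q ∧ lamIndex 3 l = 0 ↔
      l = List.range' 1 q 3 ∨ l = List.range' 2 q 3 := by
  refine ⟨?_, ?_⟩
  · rintro ⟨hl, rfl, hidx⟩
    cases l with
    | nil => simp
    | cons a t =>
      obtain ⟨ha, haux⟩ := (lamIndex_three_cons_eq_zero_iff hl.1).1 hidx
      have hpos : 0 < a := hl.2 a List.mem_cons_self
      rw [blockStartsAux_eq_nil_iff hl.1] at haux
      interval_cases a
      exacts [Or.inl haux, Or.inr haux]
  · rintro (rfl | rfl)
    · exact ⟨isLamPartition_range' one_pos q, List.length_range',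
        lamIndex_three_range'_eq_zero one_le_two q⟩
    · exact ⟨isLamPartition_range' two_pos q, List.length_range',
        lamIndex_three_range'_eq_zero le_rfl q⟩

theorem sum_range'_one_three (q : ℕ) : (List.range' 1 q 3).sum = (3 * q ^ 2 - q) / 2 := by
  have heven : 2 ∣ q * (q - 1) := (Nat.even_mul_pred_self q).two_dvd
  have hsq : q ^ 2 = q * (q - 1) + q := by cases q <;> simp [sq]; ring
  rw [List.sum_range']
  omega

theorem sum_range'_two_three (q : ℕ) : (List.range' 2 q 3).sum = (3 * q ^ 2 + q) / 2 := by
  have heven : 2 ∣ q * (q - 1) := (Nat.even_mul_pred_self q).two_dvd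
  have hsq : q ^ 2 = q * (q - 1) + q := by cases q <;> simp [sq]; ring
  rw [List.sum_range']
  omega

theorem stmt_10_general (q : ℕ) :
    (∀ l : List ℕ, (IsLamPartition 3 l ∧ l.length = q ∧ lamIndex 3 l = 0) ↔
      (l = (List.range q).map (fun i => 1 + 3 * i) ∨
        l = (List.range q).map (fun i => 2 + 3 * i))) ∧
    {n : ℕ | ∃ l : List ℕ, IsLamPartition 3 l ∧ l.length = q ∧ lamIndex 3 l = 0 ∧
        l.sum = n} =
      {(3 * q ^ 2 - q) / 2, (3 * q ^ 2 + q) / 2} := by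
  simp only [List.map_range_eq_range']
  have key := (isLamPartition_three_length_lamIndex_eq_zero_iff · q)
  refine ⟨key, Set.ext fun n => ⟨?_, ?_⟩⟩
  · rintro ⟨l, hl, hlen, hidx, rfl⟩
    rcases (key l).1 ⟨hl, hlen, hidx⟩ with rfl | rfl
    exacts [Or.inl (sum_range'_one_three q), Or.inr (sum_range'_two_three q)]
  · rintro (rfl | rfl)
    · obtain ⟨hl, hlen, hidx⟩ := (key _).2 (Or.inl rfl)
      exact ⟨_, hl, hlen, hidx, sum_range'_one_three q⟩
    · obtain ⟨hl, hlen, hidx⟩ := (key _).2 (Or.inr rfl)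
      exact ⟨_, hl, hlen, hidx, sum_range'_two_three q⟩

/-- the 3-partitions of index 0 with `q` parts are exactly
`(1,4,…,1+3(q−1))` and `(2,5,…,2+3(q−1))`; consequently their degrees are exactly the
pentagonal numbers `(3q²−q)/2` and `(3q²+q)/2`. -/
theorem stmt_10 (q : ℕ) (hq : 1 ≤ q) :
    (∀ l : List ℕ, (IsLamPartition 3 l ∧ l.length = q ∧ lamIndex 3 l = 0) ↔
      (l = (List.range q).map (fun i => 1 + 3 * i) ∨
        l = (List.range q).map (fun i => 2 + 3 * i))) ∧
    {n : ℕ | ∃ l : List ℕ, IsLamPartition 3 l ∧ l.length = q ∧ lamIndex 3 l = 0 ∧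
        l.sum = n} =
      {(3 * q ^ 2 - q) / 2, (3 * q ^ 2 + q) / 2} :=
  stmt_10_general q
end

section
/- The map S sending a partition I = (x_1,...,x_r | y_1,...,y_r) in Frobenius coordinates with m parts and degree n to the marked 3-partition [(x_1+y_1, ..., x_r+y_r); (x_{a_1}+y_{a_1}, ..., x_{a_s}+y_{a_s})], where a_1 < ... < a_s are the indices with y_{a_k} − y_{a_k−1} = 2 (with y_0 = −1), is a bijection from the set of partitions of n with m distinct parts onto the set of marked 3-partitions of n of length m. -/
/-- The length of the `j`-th row (0-indexed from the top) of the Ferrers diagram of the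
partition given by the strictly increasing list `l` of its parts. -/
def rowLen (l : List ℕ) (j : ℕ) : ℕ := l.reverse.getD j 0

/-- The length of the `c`-th column (0-indexed) of the Ferrers diagram of `l`,
i.e. the conjugate partition. -/
def colLen (l : List ℕ) (c : ℕ) : ℕ :=
  ((List.range l.length).filter (fun j => decide (c < rowLen l j))).length

/-- The number of cells on the main diagonal of the Ferrers diagram of `l`. -/
def durfee (l : List ℕ) : ℕ :=
  ((List.range l.length).filter (fun j => decide (j < rowLen l j))).length

/-- `frX l i` (for `1 ≤ i ≤ durfee l`): the number of cells in the row of the `i`-th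
diagonal cell (numbered from bottom to top) lying to the right of the diagonal cell,
including the diagonal cell itself. -/
def frX (l : List ℕ) (i : ℕ) : ℕ := rowLen l (durfee l - i) - (durfee l - i)

/-- `frY l i` (for `1 ≤ i ≤ durfee l`): the number of cells in the column of the `i`-th
diagonal cell (numbered from bottom to top) lying strictly below the diagonal cell. -/
def frY (l : List ℕ) (i : ℕ) : ℕ := colLen l (durfee l - i) - (durfee l - i) - 1

/-- The map `S` of §2: a partition with Frobenius symbol `(x₁,…,x_r | y₁,…,y_r)` is
sent to the marked 3-partition whose parts are `x_i + y_i` (`i = 1,…,r`), a part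
`x_a + y_a` being marked iff `y_a − y_{a−1} = 2` (with the convention `y₀ = −1`). -/
def mapS (l : List ℕ) : List ℕ × Finset ℕ :=
  ((List.range (durfee l)).map (fun k => frX l (k + 1) + frY l (k + 1)),
   ((Finset.Icc 1 (durfee l)).filter (fun a =>
      (a = 1 ∧ frY l 1 = 1) ∨ (2 ≤ a ∧ frY l a = frY l (a - 1) + 2))).image
     (fun a => frX l a + frY l a))

/-!
`S` factors through Frobenius symbols. A partition into distinct parts is rebuilt from its
symbol `(x | y)`: the `r` rows crossing the Durfee square have lengths `x_i + (r - 1 - i)`,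
and the `t`-th row below it counts the legs `y_i` reaching that far. This identifies the
partitions of `n` into `m` distinct parts with the symbols satisfying `x_{i+1} − x_i ≥ 2`,
`y_{i+1} − y_i ∈ {1, 2}` and the conditions at `i = 1`, with `Σ (x_i + y_i) = n` and
`r + (y_r − r + 1) = m`.

On these symbols `S` is a bijection onto the marked 3-partitions: the parts `z_i = x_i + y_i`
have gaps `(x_{i+1} − x_i) + (y_{i+1} − y_i) ≥ 3`, and at a jump `y_{i+1} − y_i = 2` the gap
exceeds 3, so the jumps mark leading parts, and there are `y_r − r + 1` of them. Conversely
`(z; J)` gives back `y_k = k + #{j ≤ k | z_j ∈ J}` and `x_k = z_k − y_k`.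
-/

open Finset

section ListIndex

lemma length_filter_range (N : ℕ) (P : ℕ → Prop) [DecidablePred P] :
    ((List.range N).filter (fun j => decide (P j))).length = ((range N).filter P).card := by
  rw [card_def, filter_val, range_val, Multiset.range, Multiset.filter_coe, Multiset.coe_card]

lemma isChain_iff_getD {R : ℕ → ℕ → Prop} {l : List ℕ} :
    l.IsChain R ↔ ∀ k, k + 1 < l.length → R (l.getD k 0) (l.getD (k + 1) 0) := by
  rw [List.isChain_iff_getElem]
  refine forall_congr' fun k => ⟨fun h hk => ?_, fun h hk => ?_⟩ <;>
    simpa [List.getD_eq_getElem, hk, Nat.lt_of_succ_lt hk] using h hk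

lemma ext_getD {l₁ l₂ : List ℕ} (hlen : l₁.length = l₂.length)
    (h : ∀ k < l₁.length, l₁.getD k 0 = l₂.getD k 0) : l₁ = l₂ :=
  List.ext_getElem hlen fun k h₁ h₂ => by
    simpa [List.getD_eq_getElem, h₁, h₂] using h k h₁

lemma mem_iff_exists_getD {l : List ℕ} {v : ℕ} :
    v ∈ l ↔ ∃ k < l.length, l.getD k 0 = v := by
  simp only [List.mem_iff_getElem]
  refine exists_congr fun k =>
    ⟨fun ⟨hk, h⟩ => ⟨hk, ?_⟩, fun ⟨hk, h⟩ => ⟨hk, ?_⟩⟩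
  · rw [List.getD_eq_getElem _ _ hk, h]
  · rw [← h, List.getD_eq_getElem _ _ hk]

lemma getD_map_range {n k : ℕ} {f : ℕ → ℕ} (h : k < n) :
    ((List.range n).map f).getD k 0 = f k := by
  simp [List.getD_eq_getElem?_getD, h]

lemma sum_map_range (n : ℕ) (f : ℕ → ℕ) :
    ((List.range n).map f).sum = ∑ i ∈ range n, f i := rfl

lemma add_mul_le_of_forall_succ {f : ℕ → ℕ} {N c : ℕ}
    (h : ∀ k, k + 1 < N → f k + c ≤ f (k + 1)) {a b : ℕ} (hab : a ≤ b) (hb : b < N) :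
    f a + c * (b - a) ≤ f b := by
  induction b, hab using Nat.le_induction with
  | base => simp
  | succ b hab ih =>
    have := h b hb
    have := ih (by omega)
    rw [Nat.sub_add_comm hab, Nat.mul_succ]
    omega

lemma getD_add_mul_le_of_isChain {l : List ℕ} {c : ℕ} (hl : l.IsChain (fun a b => a + c ≤ b))
    {a b : ℕ} (hab : a ≤ b) (hb : b < l.length) : l.getD a 0 + c * (b - a) ≤ l.getD b 0 :=
  add_mul_le_of_forall_succ (isChain_iff_getD.mp hl) hab hb

end ListIndex

section Counting

variable {N : ℕ} {P : ℕ → Prop} [DecidablePred P]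

lemma filter_range_eq_Ico_of_succ (hP : ∀ k, k + 1 < N → P k → P (k + 1)) :
    (range N).filter P = Ico (N - ((range N).filter P).card) N := by
  induction N with
  | zero => simp
  | succ N ih =>
    have ih := ih fun k hk => hP k (by omega)
    rw [range_add_one, filter_insert]
    by_cases hN : P N
    · have hnot : N ∉ (range N).filter P := by simp
      rw [if_pos hN, card_insert_of_notMem hnot]
      set c := ((range N).filter P).card
      have hc : c ≤ N := by simpa using card_filter_le (range N) P
      rw [ih]
      ext k
      simp only [mem_insert, mem_Ico]
      omega
    · have hnone : (range N).filter P = ∅ := by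
        refine filter_false_of_mem fun k hk hPk => hN ?_
        have key : ∀ j, k ≤ j → j ≤ N → P j := by
          intro j hkj
          induction j, hkj using Nat.le_induction with
          | base => exact fun _ => hPk
          | succ j _ ihj => exact fun hj => hP j (by omega) (ihj (by omega))
        exact key N (by simp at hk; omega) le_rfl
      simp [if_neg hN, hnone]

lemma le_card_filter_range_iff (hP : ∀ k, k + 1 < N → P k → P (k + 1)) {t : ℕ}
    (ht : 1 ≤ t) :
    t ≤ ((range N).filter P).card ↔ t ≤ N ∧ P (N - t) := by
  have hmem := congrArg (N - t ∈ ·) (filter_range_eq_Ico_of_succ hP)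
  simp only [mem_filter, mem_range, mem_Ico, eq_iff_iff] at hmem
  have hcard : ((range N).filter P).card ≤ N := by simpa using card_filter_le (range N) P
  constructor
  · intro h
    exact ⟨by omega, (hmem.mpr ⟨by omega, by omega⟩).2⟩
  · rintro ⟨htN, hPt⟩
    have := hmem.mp ⟨by omega, hPt⟩
    omega

end Counting

/-- The Frobenius symbol `(x₁,…,x_r | y₁,…,y_r)` of a partition into distinct parts, stored
0-indexed in two lists. -/
structure IsDistinctFrobenius (xs ys : List ℕ) : Prop where
  ne_nil : xs ≠ []
  length_eq : ys.length = xs.length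
  x_gap : ∀ k, k + 1 < xs.length → xs.getD k 0 + 2 ≤ xs.getD (k + 1) 0
  y_gap_pos : ∀ k, k + 1 < xs.length → ys.getD k 0 + 1 ≤ ys.getD (k + 1) 0
  y_gap_le_two : ∀ k, k + 1 < xs.length → ys.getD (k + 1) 0 ≤ ys.getD k 0 + 2
  x_zero_pos : 1 ≤ xs.getD 0 0
  y_zero_le_one : ys.getD 0 0 ≤ 1
  y_zero_eq_zero : xs.getD 0 0 = 1 → ys.getD 0 0 = 0

/-- The number of parts below the Durfee square, `y_r − (r − 1)`. -/
def tailLength (xs ys : List ℕ) : ℕ := ys.getD (xs.length - 1) 0 - (xs.length - 1)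

/-- The part in the `t`-th row below the Durfee square (`t ≥ 1`): the number of columns
`r - 1 - i` of the square whose leg `y_i` reaches that row. -/
def tailPart (xs ys : List ℕ) (t : ℕ) : ℕ :=
  ((range xs.length).filter (fun i => t + i ≤ ys.getD i 0)).card

/-- The partition with Frobenius symbol `(xs | ys)`, as an increasing list. -/
def frobeniusPartition (xs ys : List ℕ) : List ℕ :=
  (List.range (tailLength xs ys)).map (fun s => tailPart xs ys (tailLength xs ys - s))
  ++ (List.range xs.length).map (fun i => xs.getD i 0 + (xs.length - 1 - i))

section FrobeniusPartition

variable {xs ys : List ℕ}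

lemma tailPart_le (t : ℕ) : tailPart xs ys t ≤ xs.length := by
  simpa [tailPart] using card_filter_le (range xs.length) (fun i => t + i ≤ ys.getD i 0)

lemma length_frobeniusPartition :
    (frobeniusPartition xs ys).length = tailLength xs ys + xs.length := by
  simp [frobeniusPartition]

lemma frobeniusPartition_getD_of_lt {s : ℕ} (hs : s < tailLength xs ys) :
    (frobeniusPartition xs ys).getD s 0 = tailPart xs ys (tailLength xs ys - s) := by
  rw [frobeniusPartition, List.getD_append _ _ _ _ (by simpa using hs), getD_map_range hs]

lemma frobeniusPartition_getD_add {i : ℕ} (hi : i < xs.length) :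
    (frobeniusPartition xs ys).getD (tailLength xs ys + i) 0 =
      xs.getD i 0 + (xs.length - 1 - i) := by
  rw [frobeniusPartition, List.getD_append_right _ _ _ _ (by simp)]
  simp only [List.length_map, List.length_range, Nat.add_sub_cancel_left]
  exact getD_map_range hi

lemma rowLen_frobeniusPartition_of_lt {j : ℕ} (hj : j < xs.length) :
    rowLen (frobeniusPartition xs ys) j = xs.getD (xs.length - 1 - j) 0 + j := by
  rw [rowLen, List.getD_reverse _ (by rw [length_frobeniusPartition]; omega),
    length_frobeniusPartition,
    show tailLength xs ys + xs.length - 1 - j = tailLength xs ys + (xs.length - 1 - j) by omega,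
    frobeniusPartition_getD_add (by omega)]
  omega

lemma rowLen_frobeniusPartition_of_le {j : ℕ} (hj₁ : xs.length ≤ j)
    (hj₂ : j < tailLength xs ys + xs.length) :
    rowLen (frobeniusPartition xs ys) j = tailPart xs ys (j + 1 - xs.length) := by
  rw [rowLen, List.getD_reverse _ (by rw [length_frobeniusPartition]; omega),
    length_frobeniusPartition, frobeniusPartition_getD_of_lt (by omega)]
  congr 1
  omega

end FrobeniusPartition

namespace IsDistinctFrobenius

variable {xs ys : List ℕ}

lemma length_pos (h : IsDistinctFrobenius xs ys) : 0 < xs.length := List.length_pos_iff.mpr h.ne_nil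

lemma x_add_le (h : IsDistinctFrobenius xs ys) {a b : ℕ} (hab : a ≤ b) (hb : b < xs.length) :
    xs.getD a 0 + 2 * (b - a) ≤ xs.getD b 0 :=
  add_mul_le_of_forall_succ h.x_gap hab hb

lemma y_add_le (h : IsDistinctFrobenius xs ys) {a b : ℕ} (hab : a ≤ b) (hb : b < xs.length) :
    ys.getD a 0 + 1 * (b - a) ≤ ys.getD b 0 :=
  add_mul_le_of_forall_succ h.y_gap_pos hab hb

lemma x_ge (h : IsDistinctFrobenius xs ys) {k : ℕ} (hk : k < xs.length) :
    2 * k + 1 ≤ xs.getD k 0 := by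
  have := h.x_add_le (Nat.zero_le k) hk
  have := h.x_zero_pos
  omega

lemma y_ge (h : IsDistinctFrobenius xs ys) {k : ℕ} (hk : k < xs.length) : k ≤ ys.getD k 0 := by
  have := h.y_add_le (Nat.zero_le k) hk
  omega

lemma y_sub_mono (h : IsDistinctFrobenius xs ys) {a b : ℕ} (hab : a ≤ b) (hb : b < xs.length) :
    ys.getD a 0 - a ≤ ys.getD b 0 - b := by
  have := h.y_add_le hab hb
  omega

lemma y_sub_le_tailLength (h : IsDistinctFrobenius xs ys) {k : ℕ} (hk : k < xs.length) :
    ys.getD k 0 - k ≤ tailLength xs ys :=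
  h.y_sub_mono (by omega) (by have := h.length_pos; omega)

lemma le_tailPart_iff (h : IsDistinctFrobenius xs ys) {s t : ℕ} (hs : 1 ≤ s) :
    s ≤ tailPart xs ys t ↔
      s ≤ xs.length ∧ t + (xs.length - s) ≤ ys.getD (xs.length - s) 0 :=
  le_card_filter_range_iff (fun k hk hP => by have := h.y_gap_pos k hk; omega) hs

lemma tailPart_pos (h : IsDistinctFrobenius xs ys) {t : ℕ} (ht : t ≤ tailLength xs ys) :
    1 ≤ tailPart xs ys t := by
  have := h.length_pos
  have := h.y_ge (k := xs.length - 1) (by omega)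
  rw [h.le_tailPart_iff le_rfl]
  exact ⟨by omega, by unfold tailLength at ht; omega⟩

lemma tailPart_succ_lt (h : IsDistinctFrobenius xs ys) {t : ℕ} (ht : 1 ≤ t)
    (htu : t + 1 ≤ tailLength xs ys) : tailPart xs ys (t + 1) < tailPart xs ys t := by
  set s := tailPart xs ys (t + 1)
  rcases Nat.eq_zero_or_pos s with hs | hs
  · have := h.tailPart_pos (t := t) (by omega)
    omega
  have hsucc := (h.le_tailPart_iff (t := t + 1) hs).mp le_rfl
  have hsr : s < xs.length := by
    by_contra hsr
    have := h.y_zero_le_one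
    rw [show xs.length - s = 0 by omega] at hsucc
    omega
  have hstep := h.y_gap_le_two (xs.length - s - 1) (by omega)
  rw [show xs.length - s - 1 + 1 = xs.length - s by omega] at hstep
  have : s + 1 ≤ tailPart xs ys t := by
    rw [h.le_tailPart_iff (by omega), show xs.length - (s + 1) = xs.length - s - 1 by omega]
    omega
  omega

lemma tailPart_one_lt (h : IsDistinctFrobenius xs ys) :
    tailPart xs ys 1 < xs.getD 0 0 + (xs.length - 1) := by
  have := h.x_zero_pos
  rcases Nat.lt_or_ge (tailPart xs ys 1) xs.length with hlt | hge
  · omega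
  have hr := h.length_pos
  have hy := ((h.le_tailPart_iff (s := xs.length) hr).mp hge).2
  rw [Nat.sub_self] at hy
  have := h.y_zero_le_one
  have := h.y_zero_eq_zero
  have := tailPart_le (xs := xs) (ys := ys) 1
  omega

lemma sum_tailPart (h : IsDistinctFrobenius xs ys) :
    ∑ t ∈ range (tailLength xs ys), tailPart xs ys (t + 1) =
      ∑ i ∈ range xs.length, (ys.getD i 0 - i) := by
  simp only [tailPart, card_filter]
  rw [sum_comm]
  refine sum_congr rfl fun i hi => ?_
  rw [mem_range] at hi
  have := h.y_ge hi
  have := h.y_sub_le_tailLength hi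
  rw [← card_filter, show (range (tailLength xs ys)).filter (fun t => t + 1 + i ≤ ys.getD i 0)
    = range (ys.getD i 0 - i) by ext t; simp only [mem_filter, mem_range]; omega, card_range]

lemma isDistinctPartition_frobeniusPartition (h : IsDistinctFrobenius xs ys) :
    IsDistinctPartition (frobeniusPartition xs ys) := by
  set u := tailLength xs ys
  refine ⟨isChain_iff_getD.mpr fun k hk => ?_, fun v hv => ?_⟩
  · rw [length_frobeniusPartition] at hk
    rcases Nat.lt_or_ge (k + 1) u with h1 | h1
    · rw [frobeniusPartition_getD_of_lt (by omega), frobeniusPartition_getD_of_lt h1,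
        show u - k = u - (k + 1) + 1 by omega]
      exact h.tailPart_succ_lt (by omega) (by omega)
    rcases Nat.lt_or_ge k u with h2 | h2
    · rw [frobeniusPartition_getD_of_lt h2, show u - k = 1 by omega,
        show k + 1 = u + 0 by omega, frobeniusPartition_getD_add (by omega)]
      have := h.tailPart_one_lt
      omega
    · obtain ⟨i, rfl⟩ : ∃ i, k = u + i := ⟨k - u, by omega⟩
      rw [frobeniusPartition_getD_add (by omega), add_assoc, frobeniusPartition_getD_add (by omega)]
      have := h.x_gap i (by omega)
      omega
  · obtain ⟨k, hk, rfl⟩ := mem_iff_exists_getD.mp hv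
    rw [length_frobeniusPartition] at hk
    rcases Nat.lt_or_ge k u with h1 | h1
    · rw [frobeniusPartition_getD_of_lt h1]
      exact h.tailPart_pos (by omega)
    · obtain ⟨i, rfl⟩ : ∃ i, k = u + i := ⟨k - u, by omega⟩
      rw [frobeniusPartition_getD_add (by omega)]
      have := h.x_ge (k := i) (by omega)
      omega

lemma sum_frobeniusPartition (h : IsDistinctFrobenius xs ys) :
    (frobeniusPartition xs ys).sum = ∑ i ∈ range xs.length, (xs.getD i 0 + ys.getD i 0) := by
  have htail : ((List.range (tailLength xs ys)).map
      (fun s => tailPart xs ys (tailLength xs ys - s))).sum =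
        ∑ i ∈ range xs.length, (ys.getD i 0 - i) := by
    rw [← h.sum_tailPart, sum_map_range, ← sum_range_reflect]
    refine sum_congr rfl fun t ht => ?_
    rw [mem_range] at ht
    congr 1
    omega
  rw [frobeniusPartition, List.sum_append, htail, sum_map_range,
    sum_add_distrib, sum_add_distrib, ← sum_range_reflect (fun i => xs.length - 1 - i)]
  have hy : ∀ i ∈ range xs.length, ys.getD i 0 - i + i = ys.getD i 0 := fun i hi =>
    Nat.sub_add_cancel (h.y_ge (mem_range.mp hi))
  rw [← sum_congr rfl hy, sum_add_distrib]
  have : ∀ i ∈ range xs.length, xs.length - 1 - (xs.length - 1 - i) = i := fun i hi => by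
    rw [mem_range] at hi; omega
  rw [sum_congr rfl this]
  ring

lemma durfee_frobeniusPartition (h : IsDistinctFrobenius xs ys) :
    durfee (frobeniusPartition xs ys) = xs.length := by
  rw [durfee, length_filter_range, length_frobeniusPartition]
  convert card_range xs.length using 2
  ext j
  simp only [mem_filter, mem_range]
  rcases Nat.lt_or_ge j xs.length with hj | hj
  · rw [rowLen_frobeniusPartition_of_lt hj]
    have := h.x_ge (k := xs.length - 1 - j) (by omega)
    omega
  · by_cases hju : j < tailLength xs ys + xs.length
    · rw [rowLen_frobeniusPartition_of_le hj hju]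
      have := tailPart_le (xs := xs) (ys := ys) (j + 1 - xs.length)
      omega
    · omega

lemma colLen_frobeniusPartition (h : IsDistinctFrobenius xs ys) {c : ℕ} (hc : c < xs.length) :
    colLen (frobeniusPartition xs ys) c =
      xs.length + (ys.getD (xs.length - 1 - c) 0 - (xs.length - 1 - c)) := by
  rw [colLen, length_filter_range, length_frobeniusPartition]
  have := h.y_sub_le_tailLength (k := xs.length - 1 - c) (by omega)
  have := h.y_ge (k := xs.length - 1 - c) (by omega)
  convert card_range _ using 2
  ext j
  simp only [mem_filter, mem_range]
  rcases Nat.lt_or_ge j xs.length with hj | hj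
  · rw [rowLen_frobeniusPartition_of_lt hj]
    have := h.x_ge (k := xs.length - 1 - j) (by omega)
    omega
  · by_cases hju : j < tailLength xs ys + xs.length
    · rw [rowLen_frobeniusPartition_of_le hj hju, Nat.lt_iff_add_one_le (m := c),
        h.le_tailPart_iff (by omega), show xs.length - (c + 1) = xs.length - 1 - c by omega]
      omega
    · omega

lemma frX_frobeniusPartition (h : IsDistinctFrobenius xs ys) {i : ℕ} (hi₁ : 1 ≤ i)
    (hi₂ : i ≤ xs.length) : frX (frobeniusPartition xs ys) i = xs.getD (i - 1) 0 := by
  rw [frX, h.durfee_frobeniusPartition, rowLen_frobeniusPartition_of_lt (by omega),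
    show xs.length - 1 - (xs.length - i) = i - 1 by omega]
  omega

lemma frY_frobeniusPartition (h : IsDistinctFrobenius xs ys) {i : ℕ} (hi₁ : 1 ≤ i)
    (hi₂ : i ≤ xs.length) : frY (frobeniusPartition xs ys) i = ys.getD (i - 1) 0 := by
  rw [frY, h.durfee_frobeniusPartition, h.colLen_frobeniusPartition (by omega),
    show xs.length - 1 - (xs.length - i) = i - 1 by omega]
  have := h.y_ge (k := i - 1) (by omega)
  omega

end IsDistinctFrobenius

/-- `a` (1-based) is a jump of `ys`: `y_a − y_{a−1} = 2`, with the convention `y₀ = −1`. -/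
def IsJump (ys : List ℕ) (a : ℕ) : Prop :=
  (a = 1 ∧ ys.getD 0 0 = 1) ∨ (2 ≤ a ∧ ys.getD (a - 1) 0 = ys.getD (a - 2) 0 + 2)

instance (ys : List ℕ) : DecidablePred (IsJump ys) := fun _ => by unfold IsJump; infer_instance

/-- The marked 3-partition `S(xs | ys)`, computed from the Frobenius coordinates. -/
def frobeniusMarked (xs ys : List ℕ) : List ℕ × Finset ℕ :=
  ((List.range xs.length).map (fun k => xs.getD k 0 + ys.getD k 0),
   ((Icc 1 xs.length).filter (IsJump ys)).image (fun a => xs.getD (a - 1) 0 + ys.getD (a - 1) 0))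

lemma IsDistinctFrobenius.mapS_frobeniusPartition {xs ys : List ℕ}
    (h : IsDistinctFrobenius xs ys) : mapS (frobeniusPartition xs ys) = frobeniusMarked xs ys := by
  have hr := h.length_pos
  have hX {i : ℕ} (hi : i ∈ Icc 1 xs.length) :=
    h.frX_frobeniusPartition (mem_Icc.mp hi).1 (mem_Icc.mp hi).2
  have hY {i : ℕ} (hi : i ∈ Icc 1 xs.length) :=
    h.frY_frobeniusPartition (mem_Icc.mp hi).1 (mem_Icc.mp hi).2
  rw [mapS, frobeniusMarked, h.durfee_frobeniusPartition, Prod.mk.injEq]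
  refine ⟨List.map_congr_left fun k hk => ?_, ?_⟩
  · have hk : k + 1 ∈ Icc 1 xs.length := by simp at hk ⊢; omega
    rw [hX hk, hY hk, Nat.add_sub_cancel]
  · set Y := frY (frobeniusPartition xs ys)
    have hjump : ∀ a ∈ Icc 1 xs.length,
        ((a = 1 ∧ Y 1 = 1) ∨ (2 ≤ a ∧ Y a = Y (a - 1) + 2)) ↔ IsJump ys a := fun a ha => by
      have h1 : 1 ∈ Icc 1 xs.length := by simp; omega
      rw [IsJump, hY h1]
      rcases Nat.lt_or_ge a 2 with ha2 | ha2
      · simp only [show a = 1 by simp at ha; omega]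
        simp
      · have ha' : a - 1 ∈ Icc 1 xs.length := by simp at ha ⊢; omega
        rw [hY ha, hY ha', show a - 1 - 1 = a - 2 by omega]
    rw [filter_congr hjump]
    exact image_congr fun a ha => by rw [hX (mem_filter.mp ha).1, hY (mem_filter.mp ha).1]

lemma durfee_eq_card (l : List ℕ) :
    durfee l = ((range l.length).filter (fun k => l.length - 1 - k < l.getD k 0)).card := by
  rw [durfee, length_filter_range, card_filter, card_filter, ← sum_range_reflect]
  refine sum_congr rfl fun j hj => ?_
  rw [mem_range] at hj
  rw [rowLen, List.getD_reverse _ (by omega), show l.length - 1 - (l.length - 1 - j) = j by omega]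

lemma durfee_le_length (l : List ℕ) : durfee l ≤ l.length := by
  simpa [durfee_eq_card] using card_filter_le (range l.length) _

namespace IsDistinctPartition

variable {l : List ℕ}

lemma getD_add_le (hl : IsDistinctPartition l) {a b : ℕ} (hab : a ≤ b) (hb : b < l.length) :
    l.getD a 0 + (b - a) ≤ l.getD b 0 := by
  simpa using getD_add_mul_le_of_isChain (c := 1) (hl.1.imp fun _ _ h => h) hab hb

lemma getD_injOn (hl : IsDistinctPartition l) {a b : ℕ} (ha : a < l.length) (hb : b < l.length)
    (hab : l.getD a 0 = l.getD b 0) : a = b := by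
  rcases Nat.lt_trichotomy a b with h | h | h
  · have := hl.getD_add_le h.le hb; omega
  · exact h
  · have := hl.getD_add_le h.le ha; omega

lemma index_ge (hl : IsDistinctPartition l) {k : ℕ} (hk : k < l.length) :
    k + 1 ≤ l.getD k 0 := by
  have := hl.getD_add_le (Nat.zero_le k) hk
  have := hl.2 _ (mem_iff_exists_getD.mpr ⟨0, by omega, rfl⟩)
  omega

lemma sub_durfee_le_iff (hl : IsDistinctPartition l) {k : ℕ} (hk : k < l.length) :
    l.length - durfee l ≤ k ↔ l.length - 1 - k < l.getD k 0 := by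
  have hmem := congrArg (k ∈ ·) (filter_range_eq_Ico_of_succ (N := l.length)
    (P := fun k => l.length - 1 - k < l.getD k 0)
    fun k hk hP => by have := hl.getD_add_le (Nat.le_add_right k 1) hk; omega)
  simp only [mem_filter, mem_range, mem_Ico, ← durfee_eq_card, eq_iff_iff] at hmem
  constructor
  · intro h; exact (hmem.mpr ⟨h, hk⟩).2
  · intro h; exact (hmem.mp ⟨hk, h⟩).1

lemma durfee_pos (hl : IsDistinctPartition l) (hne : l ≠ []) : 0 < durfee l := by
  have hlen := List.length_pos_iff.mpr hne
  have := (hl.sub_durfee_le_iff (k := l.length - 1) (by omega)).mpr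
    (by have := hl.index_ge (k := l.length - 1) (by omega); omega)
  omega

lemma getD_le_durfee (hl : IsDistinctPartition l) {k : ℕ} (hk : k < l.length - durfee l) :
    l.getD k 0 ≤ durfee l := by
  have hlast := mt (hl.sub_durfee_le_iff (k := l.length - durfee l - 1) (by omega)).mpr
    (by omega)
  have := hl.getD_add_le (a := k) (b := l.length - durfee l - 1) (by omega) (by omega)
  omega

lemma durfee_sub_le_getD (hl : IsDistinctPartition l) {i : ℕ} (hi : i < durfee l) :
    durfee l - i ≤ l.getD (l.length - durfee l + i) 0 := by
  have := durfee_le_length l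
  have := (hl.sub_durfee_le_iff (k := l.length - durfee l + i) (by omega)).mp (by omega)
  omega

end IsDistinctPartition

/-- The Frobenius coordinates `x_i` of `l`, read off the rows crossing the Durfee square. -/
def frobXs (l : List ℕ) : List ℕ :=
  (List.range (durfee l)).map (fun i => l.getD (l.length - durfee l + i) 0 - (durfee l - 1 - i))

/-- The number of parts of `l` below its Durfee square that are at least `v`. -/
def tailCount (l : List ℕ) (v : ℕ) : ℕ :=
  ((range (l.length - durfee l)).filter (fun k => v ≤ l.getD k 0)).card

/-- The Frobenius coordinates `y_i` of `l`: besides the `i` cells of the square below the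
diagonal, column `durfee l - 1 - i` meets every row below the square whose part is at
least `durfee l - i`. -/
def frobYs (l : List ℕ) : List ℕ :=
  (List.range (durfee l)).map (fun i => i + tailCount l (durfee l - i))

@[simp]
lemma length_frobXs (l : List ℕ) : (frobXs l).length = durfee l := by
  simp [frobXs]

lemma tailCount_succ_le (l : List ℕ) (v : ℕ) : tailCount l (v + 1) ≤ tailCount l v :=
  card_le_card fun k hk => by simp only [mem_filter] at hk ⊢; exact ⟨hk.1, by omega⟩

section FrobeniusCoordinates

variable {l : List ℕ}

lemma frobXs_getD {i : ℕ} (hi : i < durfee l) :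
    (frobXs l).getD i 0 = l.getD (l.length - durfee l + i) 0 - (durfee l - 1 - i) :=
  getD_map_range hi

lemma frobYs_getD {i : ℕ} (hi : i < durfee l) :
    (frobYs l).getD i 0 = i + tailCount l (durfee l - i) :=
  getD_map_range hi

end FrobeniusCoordinates

namespace IsDistinctPartition

variable {l : List ℕ}

lemma tailCount_le_succ (hl : IsDistinctPartition l) (v : ℕ) :
    tailCount l v ≤ tailCount l (v + 1) + 1 := by
  unfold tailCount
  set N := l.length - durfee l
  have hsub : (range N).filter (fun k => v ≤ l.getD k 0) ⊆
      (range N).filter (fun k => v + 1 ≤ l.getD k 0) ∪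
        (range N).filter (fun k => l.getD k 0 = v) := by
    intro k hk
    simp only [mem_filter, mem_union, mem_range] at hk ⊢
    omega
  have hone : ((range N).filter (fun k => l.getD k 0 = v)).card ≤ 1 :=
    card_le_one.mpr fun a ha b hb => by
      simp only [mem_filter, mem_range] at ha hb
      exact hl.getD_injOn (by omega) (by omega) (ha.2.trans hb.2.symm)
  exact (card_le_card hsub).trans ((card_union_le _ _).trans (by omega))

lemma tailCount_durfee_le_one (hl : IsDistinctPartition l) : tailCount l (durfee l) ≤ 1 := by
  have hnone : tailCount l (durfee l + 1) = 0 := card_eq_zero.mpr <| filter_false_of_mem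
    fun k hk => by have := hl.getD_le_durfee (mem_range.mp hk); omega
  have := hl.tailCount_le_succ (durfee l)
  omega

lemma isDistinctFrobenius (hl : IsDistinctPartition l) (hne : l ≠ []) :
    IsDistinctFrobenius (frobXs l) (frobYs l) := by
  have hd := hl.durfee_pos hne
  have := durfee_le_length l
  have hlen := length_frobXs l
  refine ⟨by rw [← List.length_pos_iff]; omega, by simp [frobXs, frobYs], fun k hk => ?_,
    fun k hk => ?_, fun k hk => ?_, ?_, ?_, fun hx => ?_⟩
  · rw [hlen] at hk
    rw [frobXs_getD (by omega), frobXs_getD hk, ← add_assoc]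
    have := hl.getD_add_le (Nat.le_add_right (l.length - durfee l + k) 1) (by omega)
    have := hl.durfee_sub_le_getD (i := k) (by omega)
    omega
  · rw [hlen] at hk
    rw [frobYs_getD (by omega), frobYs_getD hk]
    have := tailCount_succ_le l (durfee l - (k + 1))
    rw [show durfee l - (k + 1) + 1 = durfee l - k by omega] at this
    omega
  · rw [hlen] at hk
    rw [frobYs_getD hk, frobYs_getD (by omega)]
    have := hl.tailCount_le_succ (durfee l - (k + 1))
    rw [show durfee l - (k + 1) + 1 = durfee l - k by omega] at this
    omega
  · rw [frobXs_getD hd]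
    have := hl.durfee_sub_le_getD hd
    omega
  · rw [frobYs_getD hd, Nat.sub_zero]
    have := hl.tailCount_durfee_le_one
    omega
  · rw [frobXs_getD hd] at hx
    rw [frobYs_getD hd, Nat.sub_zero, zero_add, tailCount, card_eq_zero]
    refine filter_false_of_mem fun k hk => ?_
    rw [mem_range] at hk
    have := hl.durfee_sub_le_getD hd
    have := hl.getD_add_le (a := k) (b := l.length - durfee l + 0) (by omega) (by omega)
    omega

lemma tailLength_frobXs_frobYs (hl : IsDistinctPartition l) (hne : l ≠ []) :
    tailLength (frobXs l) (frobYs l) = l.length - durfee l := by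
  have hd := hl.durfee_pos hne
  have hlen := length_frobXs l
  rw [tailLength, hlen, frobYs_getD (by omega), tailCount,
    filter_true_of_mem fun k hk => ?_, card_range]
  · omega
  · have := hl.index_ge (k := k) (by simp at hk; omega)
    omega

lemma tailPart_frobXs_frobYs (hl : IsDistinctPartition l) {k : ℕ}
    (hk : k < l.length - durfee l) :
    tailPart (frobXs l) (frobYs l) (l.length - durfee l - k) = l.getD k 0 := by
  set N := l.length - durfee l
  have hv := hl.getD_le_durfee hk
  have hrow : ∀ i ∈ range (durfee l),
      N - k + i ≤ (frobYs l).getD i 0 ↔ i ∈ Ico (durfee l - l.getD k 0) (durfee l) := by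
    intro i hi
    rw [mem_range] at hi
    have hiff := le_card_filter_range_iff (N := N) (P := fun k => durfee l - i ≤ l.getD k 0)
      (fun k hk _ => by have := hl.getD_add_le (Nat.le_add_right k 1) (by omega); omega)
      (t := N - k) (by omega)
    rw [show N - (N - k) = k by omega] at hiff
    rw [frobYs_getD hi, tailCount, add_comm i, Nat.add_le_add_iff_right, hiff, mem_Ico]
    omega
  rw [tailPart, length_frobXs, filter_congr hrow, filter_mem_eq_inter,
    inter_eq_right.mpr fun i hi => by simp only [mem_Ico, mem_range] at hi ⊢; omega, Nat.card_Ico]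
  omega

lemma frobeniusPartition_frobXs_frobYs (hl : IsDistinctPartition l) (hne : l ≠ []) :
    frobeniusPartition (frobXs l) (frobYs l) = l := by
  have hlen := length_frobXs l
  have htail := hl.tailLength_frobXs_frobYs hne
  have := durfee_le_length l
  refine ext_getD (by rw [length_frobeniusPartition, htail, hlen]; omega) fun k hk => ?_
  rw [length_frobeniusPartition, htail, hlen] at hk
  rcases Nat.lt_or_ge k (l.length - durfee l) with hks | hkb
  · rw [frobeniusPartition_getD_of_lt (by omega), htail, hl.tailPart_frobXs_frobYs hks]
  · obtain ⟨i, rfl⟩ : ∃ i, k = l.length - durfee l + i :=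
      ⟨k - (l.length - durfee l), by omega⟩
    rw [← htail, frobeniusPartition_getD_add (by omega), hlen, frobXs_getD (by omega), htail]
    have := hl.durfee_sub_le_getD (i := i) (by omega)
    omega

end IsDistinctPartition

lemma mem_blockStartsAux {lam p v : ℕ} {t : List ℕ} :
    v ∈ blockStartsAux lam p t ↔
      ∃ k < t.length, t.getD k 0 = v ∧ (p :: t).getD k 0 + lam < v := by
  induction t generalizing p with
  | nil => simp [blockStartsAux]
  | cons a t ih =>
    rw [blockStartsAux, List.mem_append, ih, List.length_cons, Nat.exists_lt_succ_left]
    by_cases hpa : p + lam < a <;> simp [hpa] <;> grind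

lemma mem_blockStarts {lam v : ℕ} {l : List ℕ} :
    v ∈ blockStarts lam l ↔
      ∃ k < l.length, l.getD k 0 = v ∧ (k = 0 ∨ l.getD (k - 1) 0 + lam < v) := by
  cases l with
  | nil => simp [blockStarts]
  | cons a t =>
    rw [blockStarts, List.mem_cons, mem_blockStartsAux, List.length_cons, Nat.exists_lt_succ_left]
    simp [eq_comm]

lemma exists_getD_of_mem_leadingParts {lam v : ℕ} {l : List ℕ} (hv : v ∈ leadingParts lam l) :
    ∃ k < l.length, l.getD k 0 = v := by
  unfold leadingParts at hv
  split_ifs at hv <;>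
  · obtain ⟨k, hk, hkv, -⟩ := mem_blockStarts.mp (List.mem_filter.mp hv).1
    exact ⟨k, hk, hkv⟩

namespace IsLamPartition

variable {lam : ℕ} {zs : List ℕ}

lemma getD_add_le (hz : IsLamPartition lam zs) {a b : ℕ} (hab : a ≤ b) (hb : b < zs.length) :
    zs.getD a 0 + lam * (b - a) ≤ zs.getD b 0 :=
  getD_add_mul_le_of_isChain hz.1 hab hb

lemma getD_pos (hz : IsLamPartition lam zs) {k : ℕ} (hk : k < zs.length) : 0 < zs.getD k 0 :=
  hz.2 _ (mem_iff_exists_getD.mpr ⟨k, hk, rfl⟩)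

lemma getD_injOn (hz : IsLamPartition lam zs) (hlam : 0 < lam) {a b : ℕ} (ha : a < zs.length)
    (hb : b < zs.length) (hab : zs.getD a 0 = zs.getD b 0) : a = b := by
  rcases Nat.lt_trichotomy a b with h | h | h
  · have := hz.getD_add_le h.le hb
    have := Nat.mul_le_mul_left lam (show 1 ≤ b - a by omega)
    omega
  · exact h
  · have := hz.getD_add_le h.le ha
    have := Nat.mul_le_mul_left lam (show 1 ≤ a - b by omega)
    omega

lemma getD_mem_leadingParts_iff (hz : IsLamPartition 3 zs) {k : ℕ} (hk : k < zs.length) :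
    zs.getD k 0 ∈ leadingParts 3 zs ↔
      2 < zs.getD k 0 ∧ (k = 0 ∨ zs.getD (k - 1) 0 + 3 < zs.getD k 0) := by
  rw [leadingParts, if_neg (by norm_num), List.mem_filter, mem_blockStarts, decide_eq_true_iff]
  constructor
  · rintro ⟨⟨j, hj, hjk, hprev⟩, h2⟩
    obtain rfl := hz.getD_injOn (by norm_num) hj hk hjk
    exact ⟨h2, hprev⟩
  · rintro ⟨h2, hprev⟩
    exact ⟨⟨k, hk, rfl, hprev⟩, h2⟩

end IsLamPartition

section FrobeniusMarked

variable {xs ys : List ℕ}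

lemma length_frobeniusMarked_fst : (frobeniusMarked xs ys).1.length = xs.length := by
  simp [frobeniusMarked]

lemma frobeniusMarked_fst_getD {k : ℕ} (hk : k < xs.length) :
    (frobeniusMarked xs ys).1.getD k 0 = xs.getD k 0 + ys.getD k 0 :=
  getD_map_range hk

lemma sum_frobeniusMarked_fst :
    (frobeniusMarked xs ys).1.sum = ∑ i ∈ range xs.length, (xs.getD i 0 + ys.getD i 0) :=
  sum_map_range _ _

end FrobeniusMarked

namespace IsDistinctFrobenius

variable {xs ys : List ℕ}

lemma xy_add_le (h : IsDistinctFrobenius xs ys) {a b : ℕ} (hab : a ≤ b) (hb : b < xs.length) :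
    xs.getD a 0 + ys.getD a 0 + 3 * (b - a) ≤ xs.getD b 0 + ys.getD b 0 := by
  have := h.x_add_le hab hb
  have := h.y_add_le hab hb
  omega

lemma add_injOn (h : IsDistinctFrobenius xs ys) {a b : ℕ} (ha : a < xs.length)
    (hb : b < xs.length) (hab : xs.getD a 0 + ys.getD a 0 = xs.getD b 0 + ys.getD b 0) :
    a = b := by
  rcases Nat.lt_trichotomy a b with hlt | rfl | hlt
  · have := h.xy_add_le hlt.le hb; omega
  · rfl
  · have := h.xy_add_le hlt.le ha; omega

lemma isLamPartition_frobeniusMarked_fst (h : IsDistinctFrobenius xs ys) :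
    IsLamPartition 3 (frobeniusMarked xs ys).1 := by
  refine ⟨isChain_iff_getD.mpr fun k hk => ?_, fun v hv => ?_⟩
  · rw [length_frobeniusMarked_fst] at hk
    rw [frobeniusMarked_fst_getD (by omega), frobeniusMarked_fst_getD hk]
    simpa using h.xy_add_le (Nat.le_add_right k 1) hk
  · obtain ⟨k, hk, rfl⟩ := mem_iff_exists_getD.mp hv
    rw [length_frobeniusMarked_fst] at hk
    rw [frobeniusMarked_fst_getD hk]
    have := h.x_ge hk
    omega

lemma mem_frobeniusMarked_snd_iff (h : IsDistinctFrobenius xs ys) {a : ℕ}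
    (ha : a ∈ Icc 1 xs.length) :
    xs.getD (a - 1) 0 + ys.getD (a - 1) 0 ∈ (frobeniusMarked xs ys).2 ↔ IsJump ys a := by
  rw [frobeniusMarked, mem_image]
  refine ⟨fun ⟨b, hb, hba⟩ => ?_, fun hjump => ⟨a, mem_filter.mpr ⟨ha, hjump⟩, rfl⟩⟩
  rw [mem_filter, mem_Icc] at hb
  rw [mem_Icc] at ha
  obtain rfl : b = a := by
    have := h.add_injOn (a := b - 1) (b := a - 1) (by omega) (by omega) hba
    omega
  exact hb.2

lemma isMarked_frobeniusMarked (h : IsDistinctFrobenius xs ys) :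
    IsMarked 3 (frobeniusMarked xs ys) := by
  have hz := h.isLamPartition_frobeniusMarked_fst
  refine ⟨hz, fun v hv => ?_⟩
  obtain ⟨a, ha, rfl⟩ := mem_image.mp hv
  rw [mem_filter, mem_Icc] at ha
  obtain ⟨⟨ha1, har⟩, hjump⟩ := ha
  have hk : a - 1 < (frobeniusMarked xs ys).1.length := by
    rw [length_frobeniusMarked_fst]; omega
  rw [← frobeniusMarked_fst_getD (by omega), hz.getD_mem_leadingParts_iff hk,
    frobeniusMarked_fst_getD (by omega)]
  have := h.x_ge (k := a - 1) (by omega)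
  rcases hjump with ⟨rfl, hy⟩ | ⟨ha2, hy⟩
  · simp only [Nat.sub_self] at *
    have := h.y_zero_eq_zero
    exact ⟨by omega, Or.inl trivial⟩
  · rw [frobeniusMarked_fst_getD (by omega), show a - 1 - 1 = a - 2 by omega]
    have := h.x_gap (a - 2) (by omega)
    rw [show a - 2 + 1 = a - 1 by omega] at this
    exact ⟨by omega, Or.inr (by omega)⟩

lemma card_jumps_add (h : IsDistinctFrobenius xs ys) {k : ℕ} (hk : k < xs.length) :
    ((Icc 1 (k + 1)).filter (IsJump ys)).card + k = ys.getD k 0 := by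
  induction k with
  | zero =>
    have := h.y_zero_le_one
    rw [show Icc 1 (0 + 1) = {1} from rfl, filter_singleton]
    by_cases hy : ys.getD 0 0 = 1
    · rw [if_pos (show IsJump ys 1 from Or.inl ⟨rfl, hy⟩), card_singleton, hy]
    · rw [if_neg (show ¬IsJump ys 1 by rintro (⟨-, h1⟩ | ⟨h2, -⟩) <;> omega), card_empty]
      omega
  | succ k ih =>
    have ih := ih (by omega)
    have hlo := h.y_gap_pos k hk
    have hhi := h.y_gap_le_two k hk
    have hnotmem : k + 2 ∉ (Icc 1 (k + 1)).filter (IsJump ys) := by simp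
    rw [show Icc 1 (k + 1 + 1) = insert (k + 2) (Icc 1 (k + 1)) by
      ext; simp only [mem_Icc, mem_insert]; omega, filter_insert]
    have hjump : IsJump ys (k + 2) ↔ ys.getD (k + 1) 0 = ys.getD k 0 + 2 := by
      simp only [IsJump, show k + 2 - 1 = k + 1 by omega, show k + 2 - 2 = k by omega]
      omega
    by_cases hj : ys.getD (k + 1) 0 = ys.getD k 0 + 2
    · rw [if_pos (hjump.mpr hj), card_insert_of_notMem hnotmem]
      omega
    · rw [if_neg (mt hjump.mp hj)]
      omega

lemma card_frobeniusMarked_snd (h : IsDistinctFrobenius xs ys) :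
    (frobeniusMarked xs ys).2.card = tailLength xs ys := by
  have hr := h.length_pos
  have := h.card_jumps_add (k := xs.length - 1) (by omega)
  rw [frobeniusMarked, card_image_of_injOn, tailLength]
  · rw [Nat.sub_add_cancel hr] at this
    omega
  · intro a ha b hb hab
    have ha := (mem_Icc.mp (mem_filter.mp ha).1)
    have hb := (mem_Icc.mp (mem_filter.mp hb).1)
    have := h.add_injOn (a := a - 1) (b := b - 1) (by omega) (by omega) hab
    omega

end IsDistinctFrobenius

/-- The jumps determine `ys` (`IsDistinctFrobenius.card_jumps_add`), and then the parts
`x_k + y_k` determine `xs`. -/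
lemma IsDistinctFrobenius.eq_of_frobeniusMarked_eq {xs ys xs' ys' : List ℕ}
    (h : IsDistinctFrobenius xs ys) (h' : IsDistinctFrobenius xs' ys')
    (heq : frobeniusMarked xs ys = frobeniusMarked xs' ys') : xs = xs' ∧ ys = ys' := by
  have hlen : xs.length = xs'.length := by
    simpa [length_frobeniusMarked_fst] using congrArg (·.1.length) heq
  have hz : ∀ k < xs.length, xs.getD k 0 + ys.getD k 0 = xs'.getD k 0 + ys'.getD k 0 :=
    fun k hk => by
      rw [← frobeniusMarked_fst_getD hk, ← frobeniusMarked_fst_getD (hlen ▸ hk), heq]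
  have hjump : ∀ a ∈ Icc 1 xs.length, IsJump ys a ↔ IsJump ys' a := fun a ha => by
    have ha' : a ∈ Icc 1 xs'.length := hlen ▸ ha
    rw [← h.mem_frobeniusMarked_snd_iff ha, ← h'.mem_frobeniusMarked_snd_iff ha', heq,
      hz (a - 1) (by simp at ha; omega)]
  have hy : ∀ k < xs.length, ys.getD k 0 = ys'.getD k 0 := fun k hk => by
    rw [← h.card_jumps_add hk, ← h'.card_jumps_add (hlen ▸ hk),
      filter_congr fun a ha => hjump a (by simp at ha ⊢; omega)]
  have hys : ys = ys' :=
    ext_getD (by rw [h.length_eq, h'.length_eq, hlen]) fun k hk => hy k (h.length_eq ▸ hk)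
  refine ⟨ext_getD hlen fun k hk => ?_, hys⟩
  have := hz k hk
  rw [hy k hk] at this
  omega

/-- The inverse of `S` on the `y`-side: `y_k = k + #{j ≤ k | z_j ∈ J}`. -/
def markedY (zs : List ℕ) (J : Finset ℕ) : ℕ → ℕ
  | 0 => if zs.getD 0 0 ∈ J then 1 else 0
  | k + 1 => markedY zs J k + 1 + if zs.getD (k + 1) 0 ∈ J then 1 else 0

def markedYs (zs : List ℕ) (J : Finset ℕ) : List ℕ :=
  (List.range zs.length).map (markedY zs J)

def markedXs (zs : List ℕ) (J : Finset ℕ) : List ℕ :=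
  (List.range zs.length).map (fun k => zs.getD k 0 - markedY zs J k)

namespace IsMarked

variable {zs : List ℕ} {J : Finset ℕ}

lemma leading_of_mem (hp : IsMarked 3 (zs, J)) {k : ℕ} (hk : k < zs.length)
    (hJ : zs.getD k 0 ∈ J) :
    2 < zs.getD k 0 ∧ (k = 0 ∨ zs.getD (k - 1) 0 + 3 < zs.getD k 0) :=
  (hp.1.getD_mem_leadingParts_iff hk).mp (hp.2 _ hJ)

lemma markedY_lt (hp : IsMarked 3 (zs, J)) {k : ℕ} (hk : k < zs.length) :
    markedY zs J k < zs.getD k 0 := by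
  have hz : IsLamPartition 3 zs := hp.1
  induction k with
  | zero =>
    have := hz.getD_pos hk
    by_cases hJ : zs.getD 0 0 ∈ J
    · have := (hp.leading_of_mem hk hJ).1
      simp only [markedY, if_pos hJ]
      omega
    · simp only [markedY, if_neg hJ]
      omega
  | succ k ih =>
    have := ih (by omega)
    have := hz.getD_add_le (Nat.le_add_right k 1) hk
    by_cases hJ : zs.getD (k + 1) 0 ∈ J
    · have := (hp.leading_of_mem hk hJ).2
      simp only [markedY, if_pos hJ, Nat.add_sub_cancel] at *
      omega
    · simp only [markedY, if_neg hJ]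
      omega

lemma markedXs_getD {k : ℕ} (hk : k < zs.length) :
    (markedXs zs J).getD k 0 = zs.getD k 0 - markedY zs J k :=
  getD_map_range hk

lemma markedYs_getD {k : ℕ} (hk : k < zs.length) : (markedYs zs J).getD k 0 = markedY zs J k :=
  getD_map_range hk

lemma isDistinctFrobenius (hp : IsMarked 3 (zs, J)) (hne : zs ≠ []) :
    IsDistinctFrobenius (markedXs zs J) (markedYs zs J) := by
  have hz : IsLamPartition 3 zs := hp.1
  have hlen := List.length_pos_iff.mpr hne
  have hxlen : (markedXs zs J).length = zs.length := by simp [markedXs]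
  have hy0 : markedY zs J 0 ≤ 1 := by simp only [markedY]; split_ifs <;> omega
  refine ⟨by rw [← List.length_pos_iff]; omega, by simp [markedXs, markedYs],
    fun k hk => ?_, fun k hk => ?_, fun k hk => ?_, ?_, ?_, fun hx => ?_⟩
  · rw [hxlen] at hk
    rw [markedXs_getD hk, markedXs_getD (by omega)]
    have := hp.markedY_lt (k := k) (by omega)
    have := hp.markedY_lt hk
    have := hz.getD_add_le (Nat.le_add_right k 1) hk
    by_cases hJ : zs.getD (k + 1) 0 ∈ J
    · have := (hp.leading_of_mem hk hJ).2
      simp only [markedY, if_pos hJ, Nat.add_sub_cancel] at *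
      omega
    · simp only [markedY, if_neg hJ] at *
      omega
  · rw [hxlen] at hk
    rw [markedYs_getD hk, markedYs_getD (by omega), markedY]
    omega
  · rw [hxlen] at hk
    rw [markedYs_getD hk, markedYs_getD (by omega), markedY]
    split_ifs <;> omega
  · rw [markedXs_getD hlen]
    have := hp.markedY_lt hlen
    omega
  · rwa [markedYs_getD hlen]
  · rw [markedXs_getD hlen] at hx
    rw [markedYs_getD hlen, markedY, if_neg fun hJ => ?_]
    have := (hp.leading_of_mem hlen hJ).1
    simp only [markedY, if_pos hJ] at hx
    omega

lemma isJump_markedYs_iff {a : ℕ} (ha : a ∈ Icc 1 zs.length) :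
    IsJump (markedYs zs J) a ↔ zs.getD (a - 1) 0 ∈ J := by
  rw [mem_Icc] at ha
  rcases Nat.lt_or_ge a 2 with ha2 | ha2
  · obtain rfl : a = 1 := by omega
    simp only [IsJump, markedYs_getD (show 0 < zs.length by omega), markedY]
    split_ifs <;> simp_all
  · obtain ⟨k, rfl⟩ : ∃ k, a = k + 2 := ⟨a - 2, by omega⟩
    simp only [IsJump, show k + 2 - 1 = k + 1 by omega, show k + 2 - 2 = k by omega,
      markedYs_getD (show k + 1 < zs.length by omega), markedYs_getD (show k < zs.length by omega),
      markedY]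
    split_ifs <;> simp_all

lemma frobeniusMarked_markedXs_markedYs (hp : IsMarked 3 (zs, J)) :
    frobeniusMarked (markedXs zs J) (markedYs zs J) = (zs, J) := by
  have hxlen : (markedXs zs J).length = zs.length := by simp [markedXs]
  have hz : ∀ k < zs.length, (markedXs zs J).getD k 0 + (markedYs zs J).getD k 0 = zs.getD k 0 :=
    fun k hk => by
      rw [markedXs_getD hk, markedYs_getD hk]
      have := hp.markedY_lt hk
      omega
  refine Prod.ext (ext_getD (by rw [length_frobeniusMarked_fst, hxlen]) fun k hk => ?_) ?_
  · rw [length_frobeniusMarked_fst, hxlen] at hk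
    rw [frobeniusMarked_fst_getD (hxlen ▸ hk), hz k hk]
  ext v
  simp only [frobeniusMarked, hxlen, mem_image, mem_filter]
  constructor
  · rintro ⟨a, ⟨ha, hjump⟩, rfl⟩
    rw [hz (a - 1) (by simp at ha; omega)]
    exact (isJump_markedYs_iff ha).mp hjump
  · intro hv
    obtain ⟨k, hk, rfl⟩ := exists_getD_of_mem_leadingParts (hp.2 v hv)
    have ha : k + 1 ∈ Icc 1 zs.length := by simp; omega
    refine ⟨k + 1, ⟨ha, (isJump_markedYs_iff ha).mpr hv⟩, ?_⟩
    rw [Nat.add_sub_cancel, hz k hk]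

end IsMarked

/-- Frobenius symbols of the partitions of `n` into `m` distinct parts. -/
def frobeniusSymbols (n m : ℕ) : Set (List ℕ × List ℕ) :=
  {p | IsDistinctFrobenius p.1 p.2 ∧
    ∑ i ∈ range p.1.length, (p.1.getD i 0 + p.2.getD i 0) = n ∧
    tailLength p.1 p.2 + p.1.length = m}

lemma image_frobeniusPartition_frobeniusSymbols (n m : ℕ) (hm : 1 ≤ m) :
    Function.uncurry frobeniusPartition '' frobeniusSymbols n m =
      {l | IsDistinctPartition l ∧ l.sum = n ∧ l.length = m} := by
  ext l
  constructor
  · rintro ⟨⟨xs, ys⟩, ⟨h, hsum, hlen⟩, rfl⟩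
    exact ⟨h.isDistinctPartition_frobeniusPartition, by rw [Function.uncurry_apply_pair,
      h.sum_frobeniusPartition, hsum], by rw [Function.uncurry_apply_pair,
      length_frobeniusPartition, hlen]⟩
  · rintro ⟨hl, hsum, hlen⟩
    have hne : l ≠ [] := by rintro rfl; simp at hlen; omega
    have h := hl.isDistinctFrobenius hne
    have heq := hl.frobeniusPartition_frobXs_frobYs hne
    refine ⟨(frobXs l, frobYs l), ⟨h, ?_, ?_⟩, heq⟩
    · rw [← h.sum_frobeniusPartition, heq, hsum]
    · rw [← length_frobeniusPartition, heq, hlen]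

lemma bijOn_frobeniusMarked_frobeniusSymbols (n m : ℕ) (hm : 1 ≤ m) :
    Set.BijOn (Function.uncurry frobeniusMarked) (frobeniusSymbols n m)
      {p | IsMarked 3 p ∧ p.1.sum = n ∧ p.1.length + p.2.card = m} := by
  refine ⟨?_, ?_, ?_⟩
  · rintro ⟨xs, ys⟩ ⟨h, hsum, hlen⟩
    refine ⟨h.isMarked_frobeniusMarked, by rw [Function.uncurry_apply_pair,
      sum_frobeniusMarked_fst, hsum], ?_⟩
    rw [Function.uncurry_apply_pair, length_frobeniusMarked_fst, h.card_frobeniusMarked_snd,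
      add_comm]
    exact hlen
  · rintro ⟨xs, ys⟩ ⟨h, -⟩ ⟨xs', ys'⟩ ⟨h', -⟩ heq
    obtain ⟨rfl, rfl⟩ := h.eq_of_frobeniusMarked_eq h' heq
    rfl
  · rintro ⟨zs, J⟩ ⟨hp, hsum, hlen⟩
    have hne : zs ≠ [] := by
      rintro rfl
      have hJ : J = ∅ := eq_empty_of_forall_notMem fun v hv => by
        simpa [leadingParts, blockStarts] using hp.2 v hv
      simp [hJ] at hlen
      omega
    have h := hp.isDistinctFrobenius hne
    have heq := hp.frobeniusMarked_markedXs_markedYs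
    refine ⟨(markedXs zs J, markedYs zs J), ⟨h, ?_, ?_⟩, heq⟩
    · rw [← sum_frobeniusMarked_fst, heq, hsum]
    · rw [← h.card_frobeniusMarked_snd, ← length_frobeniusMarked_fst (ys := markedYs zs J),
        heq]
      exact hlen.symm ▸ add_comm _ _

theorem stmt_13_general (n m : ℕ) (hm : 1 ≤ m) :
    Set.BijOn mapS
      {l : List ℕ | IsDistinctPartition l ∧ l.sum = n ∧ l.length = m}
      {p : List ℕ × Finset ℕ | IsMarked 3 p ∧ p.1.sum = n ∧ p.1.length + p.2.card = m} := by
  have hS : Set.EqOn (mapS ∘ Function.uncurry frobeniusPartition)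
      (Function.uncurry frobeniusMarked) (frobeniusSymbols n m) :=
    fun p hp => hp.1.mapS_frobeniusPartition
  have hbij := (bijOn_frobeniusMarked_frobeniusSymbols n m hm).congr hS.symm
  rw [← image_frobeniusPartition_frobeniusSymbols n m hm]
  exact (Set.bijOn_comp_iff hbij.injOn.of_comp).mp hbij

/-- `S` is a bijection from the partitions of `n` with `m` distinct parts
onto the marked 3-partitions of `n` of length `m`. -/
theorem stmt_13 (n m : ℕ) (hn : 1 ≤ n) (hm : 1 ≤ m) :
    Set.BijOn mapS
      {l : List ℕ | IsDistinctPartition l ∧ l.sum = n ∧ l.length = m}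
      {p : List ℕ × Finset ℕ | IsMarked 3 p ∧ p.1.sum = n ∧ p.1.length + p.2.card = m} :=
  stmt_13_general n m hm
end

section
/- Let λ ∈ {2,3} and let L = (i_1, ..., i_{q−1}, i_q) be a λ-partition whose last part i_q is a leading part (index-1 minimal part of its block). Define t_λ(u,v) = (u−1, v−1) if λ=2; (u−2, v−1) if λ=3 and v−u=1; (u−1, v−2) if λ=3 and v−u=2; and let (u_{λ,r}(i), v_{λ,r}(i)) be the r-th iterate of t_λ applied to (⌊(i−1)/2⌋, ⌊(i+2)/2⌋). Then u_{λ,q−1}(i_q) ≥ 0, with equality if and only if λ = 3, q > 1, and i_q = 2 + 3(q−1). -/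
/-- The map `t_λ` of §3: `t₂(u,v) = (u−1,v−1)`; `t₃(u,v) = (u−2,v−1)` if `v−u = 1` and
`(u−1,v−2)` if `v−u = 2`. -/
def tStep (lam : ℕ) (p : ℤ × ℤ) : ℤ × ℤ :=
  if lam = 2 then (p.1 - 1, p.2 - 1)
  else if p.2 - p.1 = 1 then (p.1 - 2, p.2 - 1)
  else (p.1 - 1, p.2 - 2)

/-- `(u_{λ,r}(i), v_{λ,r}(i))`: the `r`-th iterate of `t_λ` applied to the canonical
splitting `(⌊(i−1)/2⌋, ⌊(i+2)/2⌋)` of `i`. -/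
def uvIter (lam r : ℕ) (i : ℕ) : ℤ × ℤ :=
  (tStep lam)^[r] (((i : ℤ) - 1) / 2, ((i : ℤ) + 2) / 2)

/-! The parts of a λ-partition grow by at least λ at each step, and a leading part is preceded
by a gap larger than λ, so the last part `i` of a partition with `q ≥ 2` parts satisfies
`i ≥ λ(q−1) + 2`. For λ = 2 the map `t₂` lowers both coordinates by 1, so
`u_{2,q−1}(i) = ⌊(i−1)/2⌋ − (q−1)`, which is positive since a leading part is odd. For λ = 3 each
step of `t₃` lowers `u + v` by 3 and keeps `v − u ∈ {1, 2}`, so `2u_{3,q−1}(i) = i − 3(q−1) − (v − u)`;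
this is nonnegative and vanishes exactly when `i = 3(q−1) + 2`. -/

theorem List.IsChain.add_mul_length_le_getLast {lam p : ℕ} {t : List ℕ}
    (h : (p :: t).IsChain (fun a b => a + lam ≤ b)) (ht : t ≠ []) :
    p + lam * t.length ≤ t.getLast ht := by
  induction t generalizing p with
  | nil => exact absurd rfl ht
  | cons b t ih =>
    obtain ⟨hpb, hbt⟩ := List.isChain_cons_cons.mp h
    cases t with
    | nil => simpa using hpb
    | cons c t =>
      have := ih hbt (List.cons_ne_nil c t)
      simp only [List.length_cons, List.getLast_cons_cons] at this ⊢
      linarith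

theorem add_mul_length_lt_getLast_of_mem_blockStartsAux {lam p : ℕ} {t : List ℕ}
    (hlam : 0 < lam) (h : (p :: t).IsChain (fun a b => a + lam ≤ b)) (ht : t ≠ [])
    (hmem : t.getLast ht ∈ blockStartsAux lam p t) :
    p + lam * t.length < t.getLast ht := by
  induction t generalizing p with
  | nil => exact absurd rfl ht
  | cons b t ih =>
    obtain ⟨hpb, hbt⟩ := List.isChain_cons_cons.mp h
    cases t with
    | nil =>
      by_cases hgap : p + lam < b
      · simpa using hgap
      · simp [blockStartsAux, hgap] at hmem
    | cons c t =>
      have hbc := hbt.add_mul_length_le_getLast (List.cons_ne_nil c t)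
      have hpos : 0 < lam * (c :: t).length := Nat.mul_pos hlam (by simp)
      simp only [List.getLast_cons_cons] at hmem ⊢
      have hrest : (c :: t).getLast (List.cons_ne_nil c t) ∈ blockStartsAux lam b (c :: t) := by
        rcases List.mem_append.mp hmem with hhead | hrest
        · have : (c :: t).getLast (List.cons_ne_nil c t) = b := by
            split_ifs at hhead <;> simp_all
          omega
        · exact hrest
      have := ih hbt (List.cons_ne_nil c t) hrest
      simp only [List.length_cons] at this ⊢
      linarith

theorem IsLamPartition.lam_mul_add_two_le_getLast {lam : ℕ} {l : List ℕ} (hlam : 0 < lam)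
    (hl : IsLamPartition lam l) (hne : l ≠ []) (hlen : 1 < l.length)
    (hmem : l.getLast hne ∈ blockStarts lam l) :
    lam * (l.length - 1) + 2 ≤ l.getLast hne := by
  obtain ⟨hchain, hpos⟩ := hl
  obtain ⟨a, b, t, rfl⟩ : ∃ a b t, l = a :: b :: t := by
    rcases l with _ | ⟨a, _ | ⟨b, t⟩⟩ <;> simp_all
  have ht : b :: t ≠ [] := List.cons_ne_nil b t
  have hfirst : 0 < a := hpos a (by simp)
  have hbound := List.IsChain.add_mul_length_le_getLast hchain ht
  have hlampos : 0 < lam * (b :: t).length := Nat.mul_pos hlam (by simp)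
  rw [List.getLast_cons ht] at hmem ⊢
  have hgap : a + lam * (b :: t).length < (b :: t).getLast ht := by
    rcases List.mem_cons.mp hmem with heq | hrest
    · omega
    · exact add_mul_length_lt_getLast_of_mem_blockStartsAux hlam hchain ht hrest
  rw [List.length_cons, Nat.add_sub_cancel]
  omega

theorem iterate_tStep_two (r : ℕ) (p : ℤ × ℤ) :
    (tStep 2)^[r] p = (p.1 - r, p.2 - r) := by
  induction r with
  | zero => simp
  | succ r ih =>
    rw [Function.iterate_succ_apply', ih]
    simp only [tStep, ↓reduceIte, Prod.mk.injEq]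
    constructor <;> push_cast <;> ring

theorem iterate_tStep_three (r : ℕ) (u v : ℤ) (huv : v - u = 1 ∨ v - u = 2) :
    ((tStep 3)^[r] (u, v)).1 + ((tStep 3)^[r] (u, v)).2 = u + v - 3 * r ∧
      (((tStep 3)^[r] (u, v)).2 - ((tStep 3)^[r] (u, v)).1 = 1 ∨
        ((tStep 3)^[r] (u, v)).2 - ((tStep 3)^[r] (u, v)).1 = 2) := by
  induction r with
  | zero => simpa using huv
  | succ r ih =>
    rw [Function.iterate_succ_apply']
    obtain ⟨hsum, hdiff⟩ := ih
    by_cases h1 : ((tStep 3)^[r] (u, v)).2 - ((tStep 3)^[r] (u, v)).1 = 1 <;>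
      simp only [tStep, h1, ↓reduceIte] <;> push_cast <;> omega

/-- Lemma 4: if the last part `i_q` of a `λ`-partition with `q` parts is
a leading part, then `u_{λ,q−1}(i_q) ≥ 0`, with equality iff `λ = 3`, `q > 1` and
`i_q = 2 + 3(q−1)`. -/
theorem stmt_14 (lam : ℕ) (hlam : lam = 2 ∨ lam = 3) (l : List ℕ) (hne : l ≠ [])
    (hl : IsLamPartition lam l) (hlead : l.getLast hne ∈ leadingParts lam l) :
    0 ≤ (uvIter lam (l.length - 1) (l.getLast hne)).1 ∧
      ((uvIter lam (l.length - 1) (l.getLast hne)).1 = 0 ↔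
        lam = 3 ∧ 1 < l.length ∧ l.getLast hne = 2 + 3 * (l.length - 1)) := by
  have hlen : 0 < l.length := List.length_pos_iff.mpr hne
  have hbound (hlam : 0 < lam) (hmem : l.getLast hne ∈ blockStarts lam l) :
      l.length = 1 ∨ lam * (l.length - 1) + 2 ≤ l.getLast hne := by
    rcases Nat.lt_or_ge 1 l.length with hlt | hle
    · exact Or.inr (hl.lam_mul_add_two_le_getLast hlam hne hlt hmem)
    · omega
  rcases hlam with rfl | rfl
  · obtain ⟨hmem, hgt, hodd⟩ : l.getLast hne ∈ blockStarts 2 l ∧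
        1 < l.getLast hne ∧ l.getLast hne % 2 = 1 := by
      simpa [leadingParts] using hlead
    have := hbound two_pos hmem
    simp only [uvIter, iterate_tStep_two]
    omega
  · obtain ⟨hmem, hgt⟩ : l.getLast hne ∈ blockStarts 3 l ∧ 2 < l.getLast hne := by
      simpa [leadingParts] using hlead
    have := hbound three_pos hmem
    obtain ⟨hsum, hdiff⟩ := iterate_tStep_three (l.length - 1)
      (((l.getLast hne : ℤ) - 1) / 2) (((l.getLast hne : ℤ) + 2) / 2) (by omega)
    rw [uvIter]
    generalize (tStep 3)^[l.length - 1] _ = p at hsum hdiff ⊢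
    omega
end

section
/- Let λ ∈ {2,3} and let L = (i_1, ..., i_{q−1}, i_q, i_{q+1}, ..., i_s) be a λ-partition with i_q a marked (leading) part. Then there exists a unique r ∈ {0,1,...,q−1} such that i_{q−r−1} < u_{λ,r}(i_q) < v_{λ,r}(i_q) ≤ i_{q−r} (with the convention i_0 = 0), where (u_{λ,r}, v_{λ,r}) denotes the r-th iterate of t_λ applied to the canonical splitting (⌊(i_q−1)/2⌋, ⌊(i_q+2)/2⌋). -/
/-- The `k`-th part of the partition `l` (1-indexed), with the convention `i₀ = 0`. -/
def partAt (l : List ℕ) (k : ℕ) : ℕ := if k = 0 then 0 else l.getD (k - 1) 0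

/-!
Write `(u_r, v_r)` for the iterates of `t_λ` on the splitting of `i := i_q`. The gap `v_r - u_r`
stays in `{1, 2}` (it is `1` throughout when `λ = 2`, as `i` is odd), so `v_{r+1} = u_r` and the
condition on `r` is `A r ∧ ¬ A (r + 1)` for `A s : v_s ≤ i_{q-s}`. Now `A 0` holds, and
`A (s + 1) → A s` since `v` drops by at most `2 ≤ λ` per step while the parts drop by at least `λ`.
Finally `A (q - 1)` forces `u_{q-1} > 0 = i_0`, i.e. `¬ A q`: for `q ≥ 2` because
`u_{q-1} + v_{q-1} = i - λ (q - 1) > i_1`, the gap just below a block start exceeding `λ`, and for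
`q = 1` because `i ≥ 3`. So `{s | A s}` is an initial segment of `[0, q - 1]`, and `r` is its last
element.
-/

theorem Nat.existsUnique_le_and_not_succ {A : ℕ → Prop} {n : ℕ} (h0 : A 0)
    (hdown : ∀ s, s + 1 ≤ n → A (s + 1) → A s) (hend : ¬(A n ∧ A (n + 1))) :
    ∃! r, r ≤ n ∧ A r ∧ ¬A (r + 1) := by
  have hanti : ∀ a b, a ≤ b → b ≤ n → A b → A a := by
    intro a b hab hbn hb
    induction b, hab using Nat.le_induction with
    | base => exact hb
    | succ b _ ih => exact ih (by omega) (hdown b hbn hb)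
  obtain ⟨r, hrn, hr, hr1⟩ : ∃ r, r ≤ n ∧ A r ∧ ¬A (r + 1) := by
    by_contra! hall
    have : ∀ s, s ≤ n → A s := by
      intro s hs
      induction s with
      | zero => exact h0
      | succ s ih => exact hall s (by omega) (ih (by omega))
    exact hend ⟨this n le_rfl, hall n le_rfl (this n le_rfl)⟩
  refine ⟨r, ⟨hrn, hr, hr1⟩, fun r' ⟨hr'n, hr', hr'1⟩ => ?_⟩
  rcases lt_trichotomy r' r with h | h | h
  · exact absurd (hanti (r' + 1) r h hrn hr) hr'1
  · exact h
  · exact absurd (hanti (r + 1) r' h hr'n hr') hr1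

def AdmissibleGap (lam : ℕ) (p : ℤ × ℤ) : Prop :=
  p.2 - p.1 = 1 ∨ (lam = 3 ∧ p.2 - p.1 = 2)

section

variable {lam : ℕ} {l : List ℕ}

theorem tStep_fst_add_snd (hlam : lam = 2 ∨ lam = 3) (p : ℤ × ℤ) :
    (tStep lam p).1 + (tStep lam p).2 = p.1 + p.2 - lam := by
  rcases hlam with rfl | rfl <;> unfold tStep <;> split_ifs <;> dsimp only <;> omega

theorem AdmissibleGap.tStep_snd (hlam : lam = 2 ∨ lam = 3) {p : ℤ × ℤ}
    (hp : AdmissibleGap lam p) : (tStep lam p).2 = p.1 := by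
  unfold AdmissibleGap at hp
  rcases hlam with rfl | rfl <;> unfold tStep <;> split_ifs <;> dsimp only <;> omega

theorem AdmissibleGap.tStep (hlam : lam = 2 ∨ lam = 3) {p : ℤ × ℤ}
    (hp : AdmissibleGap lam p) : AdmissibleGap lam (tStep lam p) := by
  unfold AdmissibleGap at hp ⊢
  rcases hlam with rfl | rfl <;> unfold _root_.tStep <;> split_ifs <;> dsimp only <;> omega

theorem uvIter_succ (r i : ℕ) : uvIter lam (r + 1) i = tStep lam (uvIter lam r i) :=
  Function.iterate_succ_apply' ..

theorem admissibleGap_uvIter (hlam : lam = 2 ∨ lam = 3) {i : ℕ}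
    (hodd : lam = 2 → i % 2 = 1) (r : ℕ) : AdmissibleGap lam (uvIter lam r i) := by
  induction r with
  | zero =>
    simp only [AdmissibleGap, uvIter, Function.iterate_zero, id]
    rcases hlam with rfl | rfl
    · have := hodd rfl; omega
    · omega
  | succ r ih => rw [uvIter_succ]; exact ih.tStep hlam

theorem uvIter_fst_add_snd (hlam : lam = 2 ∨ lam = 3) (i r : ℕ) :
    (uvIter lam r i).1 + (uvIter lam r i).2 = i - (lam * r : ℕ) := by
  induction r with
  | zero => simp only [uvIter, Function.iterate_zero, id]; omega
  | succ r ih =>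
    rw [uvIter_succ, tStep_fst_add_snd hlam, ih, Nat.mul_succ]
    push_cast; ring

theorem uvIter_succ_snd (hlam : lam = 2 ∨ lam = 3) {i : ℕ}
    (hodd : lam = 2 → i % 2 = 1) (r : ℕ) :
    (uvIter lam (r + 1) i).2 = (uvIter lam r i).1 := by
  rw [uvIter_succ, (admissibleGap_uvIter hlam hodd r).tStep_snd hlam]

theorem getElem_add_mul_le_of_isChain (hc : l.IsChain (fun a b => a + lam ≤ b)) {j k : ℕ}
    (hjk : j ≤ k) (hk : k < l.length) : l[j] + lam * (k - j) ≤ l[k] := by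
  induction k, hjk using Nat.le_induction with
  | base => simp
  | succ k hjk ih =>
    have hstep := List.isChain_iff_getElem.1 hc k hk
    have := ih (by omega)
    rw [Nat.sub_add_comm hjk, Nat.mul_succ]
    omega

theorem exists_gap_of_mem_blockStartsAux {x : ℕ} :
    ∀ {p : ℕ} {t : List ℕ}, x ∈ blockStartsAux lam p t →
      ∃ j, ∃ hj : j + 1 < (p :: t).length, (p :: t)[j] + lam < (p :: t)[j + 1] ∧
        (p :: t)[j + 1] = x
  | _, [], h => by simp [blockStartsAux] at h
  | p, a :: t, h => by
    rcases List.mem_append.1 h with h | h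
    · split_ifs at h with hgap
      · exact ⟨0, by simp, by simpa using hgap, by simp [List.mem_singleton.1 h]⟩
      · simp at h
    · obtain ⟨j, hj, hgap, rfl⟩ := exists_gap_of_mem_blockStartsAux h
      exact ⟨j + 1, by simp only [List.length_cons] at hj ⊢; omega, hgap, rfl⟩

theorem getElem_add_lt_of_mem_blockStarts (hc : l.IsChain (fun a b => a + lam ≤ b))
    (hlam : 1 ≤ lam) {k : ℕ} (hk : k + 1 < l.length) (hmem : l[k + 1] ∈ blockStarts lam l) :
    l[k] + lam < l[k + 1] := by
  have hlt : ∀ (i j : ℕ) (hi : i < l.length) (hj : j < l.length), i < j → l[i] < l[j] :=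
    List.pairwise_iff_getElem.1 ((hc.imp fun a b h => by omega).pairwise)
  obtain ⟨a, t, rfl⟩ := List.exists_cons_of_length_pos (by omega : 0 < l.length)
  rcases List.mem_cons.1 hmem with h | h
  · exact absurd h (hlt 0 (k + 1) (by simp) hk (by omega)).ne'
  · obtain ⟨j, hj, hgap, hjx⟩ := exists_gap_of_mem_blockStartsAux h
    rcases lt_trichotomy j k with hjk | rfl | hjk
    · exact absurd hjx (hlt (j + 1) (k + 1) hj hk (by omega)).ne
    · exact hgap
    · exact absurd hjx (hlt (k + 1) (j + 1) hk hj (by omega)).ne'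

theorem of_mem_leadingParts {a : ℕ} (h : a ∈ leadingParts lam l) :
    a ∈ blockStarts lam l ∧ 3 ≤ a ∧ (lam = 2 → a % 2 = 1) := by
  unfold leadingParts at h
  split_ifs at h with hlam
  · subst hlam
    simp only [List.mem_filter, decide_eq_true_eq] at h
    exact ⟨h.1, by omega, fun _ => h.2.2⟩
  · simp only [List.mem_filter, decide_eq_true_eq] at h
    exact ⟨h.1, h.2, fun h2 => absurd h2 hlam⟩

theorem partAt_zero : partAt l 0 = 0 := rfl

theorem partAt_eq_getElem {k : ℕ} (hk1 : 1 ≤ k) (hk : k ≤ l.length) :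
    partAt l k = l[k - 1] := by
  rw [partAt, if_neg (by omega), List.getD_eq_getElem]

theorem partAt_add_mul_le (hc : l.IsChain (fun a b => a + lam ≤ b)) {j k : ℕ} (hj : 1 ≤ j)
    (hjk : j ≤ k) (hk : k ≤ l.length) : partAt l j + lam * (k - j) ≤ partAt l k := by
  rw [partAt_eq_getElem hj (by omega), partAt_eq_getElem (by omega) hk,
    show k - j = (k - 1) - (j - 1) by omega]
  exact getElem_add_mul_le_of_isChain hc (by omega) _

theorem partAt_add_le_succ (hc : l.IsChain (fun a b => a + lam ≤ b)) {k : ℕ} (hk : 1 ≤ k)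
    (hkl : k + 1 ≤ l.length) : partAt l k + lam ≤ partAt l (k + 1) := by
  simpa using partAt_add_mul_le hc hk k.le_succ hkl

theorem partAt_sub_one_add_lt (hc : l.IsChain (fun a b => a + lam ≤ b)) (hlam : 1 ≤ lam)
    {k : ℕ} (hk2 : 2 ≤ k) (hk : k ≤ l.length) (hmem : partAt l k ∈ blockStarts lam l) :
    partAt l (k - 1) + lam < partAt l k := by
  obtain ⟨k, rfl⟩ : ∃ k', k = k' + 2 := ⟨k - 2, by omega⟩
  rw [partAt_eq_getElem (by omega) hk] at hmem ⊢
  rw [partAt_eq_getElem (by omega) (by omega)]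
  exact getElem_add_lt_of_mem_blockStarts hc hlam _ hmem

theorem uvIter_snd_le_partAt_succ (hlam : lam = 2 ∨ lam = 3) {i : ℕ}
    (hodd : lam = 2 → i % 2 = 1) (hc : l.IsChain (fun a b => a + lam ≤ b)) {s k : ℕ}
    (hk : 1 ≤ k) (hkl : k + 1 ≤ l.length)
    (h : (uvIter lam (s + 1) i).2 ≤ (partAt l k : ℤ)) :
    (uvIter lam s i).2 ≤ (partAt l (k + 1) : ℤ) := by
  have hchain := partAt_add_le_succ hc hk hkl
  have hgap := admissibleGap_uvIter hlam hodd s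
  rw [uvIter_succ_snd hlam hodd] at h
  unfold AdmissibleGap at hgap
  omega

theorem uvIter_fst_pos_of_snd_le_partAt_one (hlam : lam = 2 ∨ lam = 3)
    (hc : l.IsChain (fun a b => a + lam ≤ b)) {q : ℕ} (hq1 : 1 ≤ q) (hq2 : q ≤ l.length)
    (hlead : partAt l q ∈ leadingParts lam l)
    (h : (uvIter lam (q - 1) (partAt l q)).2 ≤ (partAt l 1 : ℤ)) :
    0 < (uvIter lam (q - 1) (partAt l q)).1 := by
  obtain ⟨hbs, hi3, -⟩ := of_mem_leadingParts hlead
  have hsum := uvIter_fst_add_snd hlam (partAt l q) (q - 1)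
  rcases Nat.lt_or_ge q 2 with hq | hq
  · obtain rfl : q = 1 := by omega
    simp only [Nat.sub_self, uvIter, Function.iterate_zero, id_eq]
    omega
  · have htele := partAt_add_mul_le hc le_rfl (show 1 ≤ q - 1 by omega) (by omega)
    have hlast := partAt_sub_one_add_lt hc (by omega) hq hq2 hbs
    have hmul : lam * (q - 1) = lam * (q - 1 - 1) + lam := by
      rw [← Nat.mul_succ]; congr 1; omega
    omega

end

/-- Lemma 5: if the `q`-th part `i_q` of a `λ`-partition is a leading
part, then there is a unique `r ∈ {0,…,q−1}` with
`i_{q−r−1} < u_{λ,r}(i_q) < v_{λ,r}(i_q) ≤ i_{q−r}` (with `i₀ = 0`). -/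
theorem stmt_15 (lam : ℕ) (hlam : lam = 2 ∨ lam = 3) (l : List ℕ)
    (hl : IsLamPartition lam l) (q : ℕ) (hq1 : 1 ≤ q) (hq2 : q ≤ l.length)
    (hlead : l.getD (q - 1) 0 ∈ leadingParts lam l) :
    ∃! r : ℕ, r ≤ q - 1 ∧
      (partAt l (q - r - 1) : ℤ) < (uvIter lam r (l.getD (q - 1) 0)).1 ∧
      (uvIter lam r (l.getD (q - 1) 0)).1 < (uvIter lam r (l.getD (q - 1) 0)).2 ∧
      (uvIter lam r (l.getD (q - 1) 0)).2 ≤ (partAt l (q - r) : ℤ) := by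
  have hc : l.IsChain (fun a b => a + lam ≤ b) := hl.1
  have hiq : l.getD (q - 1) 0 = partAt l q := (if_neg (by omega)).symm
  rw [hiq] at hlead ⊢
  obtain ⟨-, hi3, hodd⟩ := of_mem_leadingParts hlead
  let A s := (uvIter lam s (partAt l q)).2 ≤ (partAt l (q - s) : ℤ)
  have h0 : A 0 := by simp only [A, uvIter, Function.iterate_zero, id_eq, Nat.sub_zero]; omega
  have hdown : ∀ s, s + 1 ≤ q - 1 → A (s + 1) → A s := fun s hs h => by
    have := uvIter_snd_le_partAt_succ hlam hodd hc (s := s) (k := q - (s + 1)) (by omega)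
      (by omega) h
    rwa [show q - (s + 1) + 1 = q - s by omega] at this
  have hend : ¬(A (q - 1) ∧ A (q - 1 + 1)) := fun ⟨h1, h2⟩ => by
    simp only [A, show q - (q - 1) = 1 by omega] at h1
    have := uvIter_fst_pos_of_snd_le_partAt_one hlam hc hq1 hq2 hlead h1
    simp only [A, uvIter_succ_snd hlam hodd, show q - (q - 1 + 1) = 0 by omega, partAt_zero] at h2
    omega
  refine (existsUnique_congr fun r => ?_).2 (Nat.existsUnique_le_and_not_succ h0 hdown hend)
  have := admissibleGap_uvIter hlam hodd r
  simp only [A, uvIter_succ_snd hlam hodd, not_le, Nat.sub_sub, AdmissibleGap] at this ⊢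
  omega
end

section
/- For every n ≥ 1, the number of marked 3-partitions of n of length m equals the number of marked 2-partitions of n of length m, for every m. -/
/-!
Encode a marked `λ`-partition as the increasing list of its parts, each flagged when marked, and
let `W(n, m)` be the number of those of sum `n` and length `m`. Adding `1` to every part and moving
the mark of each marked block to its last part, which receives one more `1`, raises the sum by the
length. A list of length `m - 1` makes up the missing unit either by carrying an extra mark from
its first block, when its first part is below `λ` and so cannot be marked, or by a new part `1`.
Together these maps are a bijection onto the lists of sum `n` and length `m` from those of sum
`n - m` and length `m` or `m - 1`, so `W(n, m) = W(n - m, m) + W(n - m, m - 1)`: the recurrence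
of partitions of `n` into `m` distinct parts. Only the properties of the markable parts collected
in `MarkingRule` enter, and they hold for `λ = 2` and `λ = 3`.
-/

namespace MarkedPartition

def IsGood (lam a : ℕ) : Prop := if lam = 2 then 1 < a ∧ a % 2 = 1 else 2 < a

/-- The properties of the spacing `lam` and of the markable parts `good` on which the recurrence
rests. By `lt_lam_iff`, a list may receive a carried mark at its start exactly when its first part
is below `lam`. -/
structure MarkingRule (lam : ℕ) (good : ℕ → Prop) : Prop where
  two_lt : ∀ {a}, good a → 2 < a
  add_two : ∀ {a}, good a → good (a + 2)
  add_lam_iff : ∀ {a}, 3 ≤ a → (good (a + lam) ↔ good a)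
  lam_pos : 0 < lam
  lt_lam_iff : ∀ {a}, 0 < a → (a < lam ↔ ¬ good a ∧ good (a + 2))

theorem isGood_two {a : ℕ} : IsGood 2 a ↔ 1 < a ∧ a % 2 = 1 := Iff.rfl

theorem isGood_three {a : ℕ} : IsGood 3 a ↔ 2 < a := Iff.rfl

theorem markingRule_two : MarkingRule 2 (IsGood 2) where
  two_lt := by intro a; simp only [isGood_two]; omega
  add_two := by intro a; simp only [isGood_two]; omega
  add_lam_iff := by intro a; simp only [isGood_two]; omega
  lam_pos := two_pos
  lt_lam_iff := by intro a; simp only [isGood_two]; omega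

theorem markingRule_three : MarkingRule 3 (IsGood 3) where
  two_lt := by intro a; simp only [isGood_three]; omega
  add_two := by intro a; simp only [isGood_three]; omega
  add_lam_iff := by intro a; simp only [isGood_three]; omega
  lam_pos := three_pos
  lt_lam_iff := by intro a; simp only [isGood_three]; omega

/-- A marked `lam`-partition, as the list of its parts flagged by their marks; `b` bounds the first
part from below (the previous part plus `lam`, or `1` at the start), so that a part can be marked
only if it starts a block. -/
def Admissible (lam : ℕ) (good : ℕ → Prop) : ℕ → List (ℕ × Bool) → Prop
  | _, [] => True
  | b, (a, mk) :: t => b ≤ a ∧ (mk = true → b < a ∧ good a) ∧ Admissible lam good (a + lam) t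

def partSum (w : List (ℕ × Bool)) : ℕ := (w.map Prod.fst).sum

def marks (w : List (ℕ × Bool)) : ℕ := w.countP (·.2)

def markedLength (w : List (ℕ × Bool)) : ℕ := w.length + marks w

def headLT (k : ℕ) : List (ℕ × Bool) → Bool
  | [] => false
  | (a, _) :: _ => decide (a < k)

/-- The first part of the list may receive a carried mark: it cannot be marked itself, and the
mark stays markable wherever the block ends. -/
def CanCarry (good : ℕ → Prop) (b : ℕ) : List (ℕ × Bool) → Prop
  | [] => False
  | (a, _) :: _ => ¬ (b < a ∧ good a) ∧ good (a + 2)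

/-- Add `1` to every part and move the mark of each block, or the carried mark `c`, to the last part
of the block, which receives one more `1`. -/
def shift (lam : ℕ) : Bool → List (ℕ × Bool) → List (ℕ × Bool)
  | _, [] => []
  | c, (a, mk) :: t =>
    let e := (c || mk) && !headLT (a + lam + 1) t
    (a + 1 + e.toNat, e) :: shift lam ((c || mk) && headLT (a + lam + 1) t) t

def grow (lam m : ℕ) (w : List (ℕ × Bool)) : List (ℕ × Bool) :=
  if markedLength w = m then shift lam false w
  else if headLT lam w then shift lam true w
  else (1, false) :: shift lam false w

def markedLists (lam : ℕ) (good : ℕ → Prop) (n m : ℕ) : Set (List (ℕ × Bool)) :=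
  {w | Admissible lam good 1 w ∧ partSum w = n ∧ markedLength w = m}


section Shift

variable {lam : ℕ} {good : ℕ → Prop}

theorem admissible_cons {b a : ℕ} {mk : Bool} {t : List (ℕ × Bool)} :
    Admissible lam good b ((a, mk) :: t) ↔
      b ≤ a ∧ (mk = true → b < a ∧ good a) ∧ Admissible lam good (a + lam) t :=
  Iff.rfl

theorem Admissible.le_of_mem {b : ℕ} {w : List (ℕ × Bool)} (hw : Admissible lam good b w) :
    ∀ x ∈ w, b ≤ x.1 := by
  induction w generalizing b with
  | nil => simp
  | cons x t ih =>
    obtain ⟨hb, -, ht⟩ := hw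
    intro y hy
    rcases List.mem_cons.1 hy with rfl | hy
    · exact hb
    · exact hb.trans ((Nat.le_add_right _ _).trans (ih ht y hy))

theorem marks_cons (a : ℕ) (mk : Bool) (t : List (ℕ × Bool)) :
    marks ((a, mk) :: t) = mk.toNat + marks t := by
  cases mk <;> simp [marks, add_comm]

theorem partSum_cons (a : ℕ) (mk : Bool) (t : List (ℕ × Bool)) :
    partSum ((a, mk) :: t) = a + partSum t := by
  simp [partSum]

theorem markedLength_cons (a : ℕ) (mk : Bool) (t : List (ℕ × Bool)) :
    markedLength ((a, mk) :: t) = markedLength t + 1 + mk.toNat := by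
  simp only [markedLength, marks_cons, List.length_cons]
  ring

theorem eq_cons_of_headLT {b : ℕ} {t : List (ℕ × Bool)} (ht : Admissible lam good b t)
    (hlt : headLT (b + 1) t = true) : ∃ t', t = (b, false) :: t' := by
  obtain _ | ⟨⟨y, mk⟩, t'⟩ := t
  · cases hlt
  obtain ⟨hby, hmk, -⟩ := ht
  have hyb : y < b + 1 := by simpa [headLT] using hlt
  obtain rfl : y = b := by omega
  obtain rfl : mk = false := by cases mk <;> simp_all
  exact ⟨t', rfl⟩

theorem le_head_of_headLT_eq_false {k : ℕ} {t : List (ℕ × Bool)} (h : headLT k t = false) :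
    ∀ x ∈ t.head?, k ≤ x.1 := by
  obtain _ | ⟨⟨y, mk⟩, t'⟩ := t
  · simp
  · simpa [headLT] using h

theorem shift_cons (c : Bool) (a : ℕ) (mk : Bool) (t : List (ℕ × Bool)) :
    shift lam c ((a, mk) :: t) =
      (a + 1 + ((c || mk) && !headLT (a + lam + 1) t).toNat,
        (c || mk) && !headLT (a + lam + 1) t) ::
      shift lam ((c || mk) && headLT (a + lam + 1) t) t :=
  rfl

theorem length_shift (c : Bool) (w : List (ℕ × Bool)) : (shift lam c w).length = w.length := by
  induction w generalizing c with
  | nil => rfl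
  | cons x t ih => simp [shift, ih]

theorem partSum_shift (c : Bool) (w : List (ℕ × Bool)) :
    partSum (shift lam c w) = partSum w + w.length + marks (shift lam c w) := by
  induction w generalizing c with
  | nil => rfl
  | cons x t ih =>
    obtain ⟨a, mk⟩ := x
    rw [shift_cons, marks_cons]
    simp only [partSum, List.map_cons, List.sum_cons] at ih ⊢
    rw [ih]
    simp only [List.length_cons]
    ring

/-- A carried mark only enters a part that cannot be marked (property `M`), so the carry and the
mark of a part are recovered from their disjunction. -/
theorem carry_eq_and_mark_eq {c₁ mk₁ c₂ mk₂ : Bool} {M : Prop} (h : (c₁ || mk₁) = (c₂ || mk₂))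
    (hc₁ : c₁ = true → ¬ M) (hmk₁ : mk₁ = true → M) (hc₂ : c₂ = true → ¬ M)
    (hmk₂ : mk₂ = true → M) : c₁ = c₂ ∧ mk₁ = mk₂ := by
  by_cases hM : M <;> cases c₁ <;> cases mk₁ <;> cases c₂ <;> cases mk₂ <;> simp_all

theorem exists_carry_mark (d : Bool) (M : Prop) :
    ∃ c mk : Bool, (c || mk) = d ∧ (c = true → ¬ M) ∧ (mk = true → M) := by
  by_cases hM : M
  · exact ⟨false, d, by simp, by simp, fun _ => hM⟩
  · exact ⟨d, false, by simp, fun _ => hM, by simp⟩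

theorem canCarry_cons_iff (R : MarkingRule lam good) {b y : ℕ} {mk : Bool} {t : List (ℕ × Bool)}
    (hy : 0 < y) (hb : b ≤ 2 ∨ b < y) : CanCarry good b ((y, mk) :: t) ↔ y < lam := by
  rw [R.lt_lam_iff hy]
  exact and_congr_left' ⟨fun h hg => h ⟨by have := R.two_lt hg; omega, hg⟩, fun h hg => h hg.2⟩

theorem canCarry_one_iff (R : MarkingRule lam good) {w : List (ℕ × Bool)}
    (hw : Admissible lam good 1 w) :
    CanCarry good 1 w ↔ headLT lam w = true := by
  obtain _ | ⟨⟨y, mk⟩, t⟩ := w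
  · simp [CanCarry, headLT]
  · simpa [headLT] using canCarry_cons_iff R hw.1 (Or.inl one_le_two)

theorem headLT_of_canCarry (R : MarkingRule lam good) {b : ℕ} {t : List (ℕ × Bool)}
    (h : CanCarry good b t) (hb : lam ≤ b) : headLT (b + 1) t = true := by
  obtain _ | ⟨⟨y, my⟩, t'⟩ := t
  · exact h.elim
  · by_contra hy
    have hby : b < y := by simpa [headLT] using hy
    have := (canCarry_cons_iff R (by omega) (Or.inr hby)).1 h
    omega

theorem good_add_two_of_carry_or_mark (R : MarkingRule lam good) {b a : ℕ} {mk c : Bool}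
    {t : List (ℕ × Bool)} (hw : Admissible lam good b ((a, mk) :: t))
    (hc : c = true → CanCarry good b ((a, mk) :: t)) (h : (c || mk) = true) : good (a + 2) := by
  rcases Bool.or_eq_true_iff.1 h with h | h
  · exact (hc h).2
  · exact R.add_two (hw.2.1 h).2

theorem canCarry_tail (R : MarkingRule lam good) {b a : ℕ} {mk c : Bool} {t : List (ℕ × Bool)}
    (hw : Admissible lam good b ((a, mk) :: t)) (hc : c = true → CanCarry good b ((a, mk) :: t))
    (h : ((c || mk) && headLT (a + lam + 1) t) = true) : CanCarry good (a + lam) t := by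
  rw [Bool.and_eq_true] at h
  obtain ⟨t', rfl⟩ := eq_cons_of_headLT hw.2.2 h.2
  have hgood := good_add_two_of_carry_or_mark R hw hc h.1
  refine ⟨fun h' => h'.1.false, ?_⟩
  rw [add_right_comm, R.add_lam_iff (by have := R.two_lt hgood; omega)]
  exact hgood

theorem admissible_shift (R : MarkingRule lam good) {b b' : ℕ} {c : Bool} {w : List (ℕ × Bool)}
    (hw : Admissible lam good b w) (hb' : ∀ x ∈ w.head?, b' ≤ x.1 + 1)
    (hc : c = true → CanCarry good b w) : Admissible lam good b' (shift lam c w) := by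
  induction w generalizing b b' c with
  | nil => trivial
  | cons x t ih =>
    obtain ⟨a, mk⟩ := x
    have hab' : b' ≤ a + 1 := hb' _ rfl
    rw [shift_cons, admissible_cons]
    cases hκ : headLT (a + lam + 1) t
    · have hnext := le_head_of_headLT_eq_false hκ
      refine ⟨by omega, fun he => ?_, ih hw.2.2 (fun y hy => ?_) (by simp)⟩
      · simp only [Bool.not_false, Bool.and_true] at he ⊢
        rw [he, Bool.toNat_true]
        exact ⟨by omega, good_add_two_of_carry_or_mark R hw hc he⟩
      · have := hnext y hy
        have := Bool.toNat_le ((c || mk) && !false)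
        omega
    · obtain ⟨t', rfl⟩ := eq_cons_of_headLT hw.2.2 hκ
      refine ⟨by omega, by simp, ih hw.2.2 (fun x hx => ?_) ?_⟩
      · cases hx
        simp only [Bool.not_true, Bool.and_false, Bool.toNat_false]
        omega
      intro h
      exact canCarry_tail R hw hc (by rw [hκ]; simpa using h)

theorem marks_shift (R : MarkingRule lam good) {b : ℕ} {c : Bool} {w : List (ℕ × Bool)}
    (hw : Admissible lam good b w) (hc : c = true → CanCarry good b w) :
    marks (shift lam c w) = marks w + c.toNat := by
  induction w generalizing b c with
  | nil =>
    cases c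
    · rfl
    · exact (hc rfl).elim
  | cons x t ih =>
    obtain ⟨a, mk⟩ := x
    rw [shift_cons, marks_cons, marks_cons, ih hw.2.2 (canCarry_tail R hw hc)]
    have hexcl : ¬ (c = true ∧ mk = true) := fun h => (hc h.1).1 (hw.2.1 h.2)
    cases c <;> cases mk <;> cases headLT (a + lam + 1) t <;> simp_all <;> omega

theorem markedLength_shift (R : MarkingRule lam good) {b : ℕ} {c : Bool} {w : List (ℕ × Bool)}
    (hw : Admissible lam good b w) (hc : c = true → CanCarry good b w) :
    markedLength (shift lam c w) = markedLength w + c.toNat := by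
  rw [markedLength, markedLength, length_shift, marks_shift R hw hc, add_assoc]

theorem partSum_shift_eq (R : MarkingRule lam good) {b : ℕ} {c : Bool} {w : List (ℕ × Bool)}
    (hw : Admissible lam good b w) (hc : c = true → CanCarry good b w) :
    partSum (shift lam c w) = partSum w + markedLength w + c.toNat := by
  rw [partSum_shift, marks_shift R hw hc, markedLength]
  ring

theorem shift_injective (R : MarkingRule lam good) {b : ℕ} {c₁ c₂ : Bool} {w₁ w₂ : List (ℕ × Bool)}
    (hw₁ : Admissible lam good b w₁) (hw₂ : Admissible lam good b w₂)
    (hc₁ : c₁ = true → CanCarry good b w₁) (hc₂ : c₂ = true → CanCarry good b w₂)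
    (h : shift lam c₁ w₁ = shift lam c₂ w₂) : c₁ = c₂ ∧ w₁ = w₂ := by
  induction w₁ generalizing b c₁ c₂ w₂ with
  | nil =>
    obtain rfl : w₂ = [] := by simpa [length_shift] using (congrArg List.length h).symm
    cases c₁ <;> cases c₂ <;> simp_all [CanCarry]
  | cons x t₁ ih =>
    obtain ⟨a₁, mk₁⟩ := x
    obtain _ | ⟨⟨a₂, mk₂⟩, t₂⟩ := w₂
    · simpa [length_shift] using congrArg List.length h
    rw [shift_cons, shift_cons, List.cons.injEq, Prod.mk.injEq] at h
    obtain ⟨⟨hval, he⟩, htail⟩ := h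
    obtain rfl : a₁ = a₂ := by rw [he] at hval; omega
    obtain ⟨hd, rfl⟩ := ih hw₁.2.2 hw₂.2.2 (canCarry_tail R hw₁ hc₁) (canCarry_tail R hw₂ hc₂) htail
    have hor : (c₁ || mk₁) = (c₂ || mk₂) := by
      cases hκ : headLT (a₁ + lam + 1) t₁ <;> simp_all
    obtain ⟨rfl, rfl⟩ := carry_eq_and_mark_eq hor (fun h => (hc₁ h).1) hw₁.2.1
      (fun h => (hc₂ h).1) hw₂.2.1
    exact ⟨rfl, rfl⟩

theorem exists_shift_eq (R : MarkingRule lam good) {b b' : ℕ} {o : List (ℕ × Bool)}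
    (ho : Admissible lam good b' o) (hb : 0 < b) (hbb' : b + 1 ≤ b') :
    ∃ c w, Admissible lam good b w ∧ (∀ x ∈ w.head?, b' ≤ x.1 + 1) ∧
      (c = true → CanCarry good b w) ∧ shift lam c w = o := by
  induction o generalizing b b' with
  | nil => exact ⟨false, [], trivial, by simp, by simp, rfl⟩
  | cons x o' ih =>
    obtain ⟨v, e⟩ := x
    obtain ⟨hv, he, ho'⟩ := ho
    obtain ⟨a, rfl, hba, hb'a⟩ : ∃ a, v = a + 1 + e.toNat ∧ b ≤ a ∧ b' ≤ a + 1 := by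
      cases e
      · exact ⟨v - 1, by rw [Bool.toNat_false]; omega, by omega, by omega⟩
      · have := (he rfl).1
        exact ⟨v - 2, by rw [Bool.toNat_true]; omega, by omega, by omega⟩
    obtain ⟨d, t, ht, htfit, hdc, rfl⟩ := ih ho' (b := a + lam) (by omega) (by omega)
    have hd : d = true → headLT (a + lam + 1) t = true := fun h =>
      headLT_of_canCarry R (hdc h) (Nat.le_add_left _ _)
    have he' : headLT (a + lam + 1) t = true → e = false := fun hκ => by
      obtain ⟨t', rfl⟩ := eq_cons_of_headLT ht hκ
      have := htfit _ rfl
      cases e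
      · rfl
      · simp only [Bool.toNat_true] at this
        omega
    obtain ⟨c, mk, hD, hcM, hmkM⟩ := exists_carry_mark (d || e) (b < a ∧ good a)
    refine ⟨c, (a, mk) :: t, ⟨hba, hmkM, ht⟩, by simpa, fun hc => ⟨hcM hc, ?_⟩, ?_⟩
    · rcases Bool.or_eq_true_iff.1 (by rw [← hD, hc, Bool.true_or] : (d || e) = true) with h | h
      · obtain ⟨t', rfl⟩ := eq_cons_of_headLT ht (hd h)
        have hgood : good (a + 2 + lam) := by simpa [add_right_comm] using (hdc h).2
        exact (R.add_lam_iff (by have := R.two_lt hgood; omega)).1 hgood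
      · simpa [h] using (he h).2
    · rw [shift_cons, hD]
      cases hκ : headLT (a + lam + 1) t
      · obtain rfl : d = false := by
          cases d
          · rfl
          · simpa [hκ] using hd rfl
        simp
      · obtain rfl := he' hκ
        simp

end Shift

section Recurrence

variable {lam : ℕ} {good : ℕ → Prop}

theorem markedLength_le_partSum (R : MarkingRule lam good) {b : ℕ} {w : List (ℕ × Bool)}
    (hw : Admissible lam good b w) (hb : 0 < b) : markedLength w ≤ partSum w := by
  induction w generalizing b with
  | nil => simp [markedLength, marks, partSum]
  | cons x t ih =>
    obtain ⟨a, mk⟩ := x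
    have ht := ih hw.2.2 (by have := hw.1; omega)
    have hmk : mk.toNat + 1 ≤ a := by
      cases mk
      · rw [Bool.toNat_false]
        exact hb.trans_le hw.1
      · rw [Bool.toNat_true]
        exact (R.two_lt (hw.2.1 rfl).2).le
    simp only [markedLength, marks_cons, partSum, List.length_cons, List.map_cons,
      List.sum_cons] at ht ⊢
    omega

theorem markedLists_finite (R : MarkingRule lam good) (n m : ℕ) :
    (markedLists lam good n m).Finite := by
  refine ((List.finite_length_le (Fin (n + 1) × Bool) n).image
    (List.map fun x => ((x.1 : ℕ), x.2))).subset ?_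
  rintro w ⟨hw, rfl, -⟩
  have hle : ∀ x ∈ w, x.1 ≤ partSum w := fun x hx =>
    List.le_sum_of_mem (List.mem_map_of_mem hx)
  refine ⟨w.map fun x => (Fin.ofNat (partSum w + 1) x.1, x.2), ?_, ?_⟩
  · have := markedLength_le_partSum R hw one_pos
    simp only [markedLength] at this
    simp only [Set.mem_ofPred_eq, List.length_map]
    omega
  · rw [List.map_map]
    refine (List.map_congr_left fun x hx => ?_).trans (List.map_id w)
    simp [Nat.mod_eq_of_lt (Nat.lt_succ_of_le (hle x hx))]

theorem markedLists_eq_empty_of_lt (R : MarkingRule lam good) {n m : ℕ} (h : n < m) :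
    markedLists lam good n m = ∅ :=
  Set.eq_empty_of_forall_notMem fun _ ⟨hw, hn, hm⟩ => by
    have := markedLength_le_partSum R hw one_pos
    omega

theorem markedLists_zero_right (n : ℕ) :
    markedLists lam good n 0 = if n = 0 then {[]} else ∅ := by
  ext w
  obtain _ | ⟨x, t⟩ := w
  · split_ifs with hn <;> simp [markedLists, partSum, markedLength, marks, Admissible, hn, eq_comm]
  · split_ifs <;> simp [markedLists, markedLength]

theorem shift_ne_one_cons {w : List (ℕ × Bool)} (hw : Admissible lam good 1 w) (c : Bool)
    (o : List (ℕ × Bool)) : shift lam c w ≠ (1, false) :: o := by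
  obtain _ | ⟨⟨a, mk⟩, t⟩ := w
  · simp [shift]
  · have := hw.1
    rw [shift_cons, Ne, List.cons.injEq, Prod.mk.injEq]
    omega

theorem grow_cases (R : MarkingRule lam good) (m : ℕ) {w : List (ℕ × Bool)}
    (hw : Admissible lam good 1 w) :
    (∃ c, (c = true → CanCarry good 1 w) ∧ grow lam m w = shift lam c w) ∨
      grow lam m w = (1, false) :: shift lam false w := by
  unfold grow
  split_ifs with h₁ h₂
  · exact Or.inl ⟨false, by simp, rfl⟩
  · exact Or.inl ⟨true, fun _ => (canCarry_one_iff R hw).2 h₂, rfl⟩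
  · exact Or.inr rfl

theorem grow_injOn (R : MarkingRule lam good) (m : ℕ) :
    Set.InjOn (grow lam m) {w | Admissible lam good 1 w} := by
  intro w₁ hw₁ w₂ hw₂ h
  rcases grow_cases R m hw₁ with ⟨c₁, hc₁, h₁⟩ | h₁ <;>
    rcases grow_cases R m hw₂ with ⟨c₂, hc₂, h₂⟩ | h₂ <;> rw [h₁, h₂] at h
  · exact (shift_injective R hw₁ hw₂ hc₁ hc₂ h).2
  · exact absurd h (shift_ne_one_cons hw₁ _ _)
  · exact absurd h.symm (shift_ne_one_cons hw₂ _ _)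
  · exact (shift_injective R hw₁ hw₂ (by simp) (by simp) (List.cons.inj h).2).2

theorem grow_mem_markedLists (R : MarkingRule lam good) {n m : ℕ} {w : List (ℕ × Bool)}
    (hm : 1 ≤ m) (hmn : m ≤ n)
    (hw : w ∈ markedLists lam good (n - m) m ∪ markedLists lam good (n - m) (m - 1)) :
    grow lam m w ∈ markedLists lam good n m := by
  have hfit : ∀ x ∈ w.head?, 1 ≤ x.1 + 1 := fun _ _ => by omega
  rcases hw with ⟨hw, hs, hl⟩ | ⟨hw, hs, hl⟩
  · rw [grow, if_pos hl]
    refine ⟨admissible_shift R hw hfit (by simp), ?_, ?_⟩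
    · rw [partSum_shift_eq R hw (by simp), Bool.toNat_false]
      omega
    · rw [markedLength_shift R hw (by simp), Bool.toNat_false]
      exact hl
  rw [grow, if_neg (by omega)]
  split_ifs with hlt
  · have hc : true = true → CanCarry good 1 w := fun _ => (canCarry_one_iff R hw).2 hlt
    refine ⟨admissible_shift R hw hfit hc, ?_, ?_⟩
    · rw [partSum_shift_eq R hw hc, Bool.toNat_true]
      omega
    · rw [markedLength_shift R hw hc, Bool.toNat_true]
      omega
  · have hhead := le_head_of_headLT_eq_false (Bool.eq_false_iff.2 hlt)
    refine ⟨⟨le_rfl, by simp, admissible_shift R hw (fun x hx => ?_) (by simp)⟩, ?_, ?_⟩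
    · have := hhead x hx
      omega
    · rw [partSum_cons, partSum_shift_eq R hw (by simp), Bool.toNat_false]
      omega
    · rw [markedLength_cons, markedLength_shift R hw (by simp), Bool.toNat_false]
      omega

theorem exists_shift_eq_of_one_cons (R : MarkingRule lam good) {o : List (ℕ × Bool)}
    (ho : Admissible lam good (1 + lam) o) :
    ∃ w, Admissible lam good 1 w ∧ headLT lam w = false ∧ shift lam false w = o := by
  obtain ⟨c, w, hw, hfit, hc, rfl⟩ := exists_shift_eq R ho one_pos (by have := R.lam_pos; omega)
  have hlt : headLT lam w = false := by
    obtain _ | ⟨⟨y, my⟩, t⟩ := w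
    · rfl
    · have := hfit _ rfl
      simp only [headLT, decide_eq_false_iff_not, not_lt]
      omega
  obtain rfl : c = false := by
    cases c
    · rfl
    · simpa [hlt] using (canCarry_one_iff R hw).1 (hc rfl)
  exact ⟨w, hw, hlt, rfl⟩

theorem exists_grow_eq (R : MarkingRule lam good) {n m : ℕ} {o : List (ℕ × Bool)} (hm : 1 ≤ m)
    (ho : o ∈ markedLists lam good n m) :
    ∃ w ∈ markedLists lam good (n - m) m ∪ markedLists lam good (n - m) (m - 1),
      grow lam m w = o := by
  obtain ⟨ho, rfl, rfl⟩ := ho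
  obtain _ | ⟨⟨v, e⟩, o'⟩ := o
  · simp [markedLength, marks] at hm
  obtain ⟨hv, he, ho'⟩ := ho
  by_cases hv1 : v = 1
  · subst hv1
    obtain rfl : e = false := by
      cases e
      · rfl
      · exact absurd (he rfl).1 (lt_irrefl 1)
    obtain ⟨w, hw, hlt, rfl⟩ := exists_shift_eq_of_one_cons R ho'
    have hml := markedLength_shift R hw (c := false) (by simp)
    rw [partSum_cons, markedLength_cons, hml, partSum_shift_eq R hw (by simp), Bool.toNat_false]
    refine ⟨w, Or.inr ⟨hw, by omega, by simp⟩, ?_⟩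
    rw [grow, if_neg (by simp), hlt, if_neg Bool.false_ne_true]
  · have ho2 : Admissible lam good 2 ((v, e) :: o') :=
      ⟨by omega, fun h => ⟨R.two_lt (he h).2, (he h).2⟩, ho'⟩
    obtain ⟨c, w, hw, -, hc, hwo⟩ := exists_shift_eq R ho2 one_pos le_rfl
    rw [← hwo, partSum_shift_eq R hw hc, markedLength_shift R hw hc]
    cases c
    · refine ⟨w, Or.inl ⟨hw, by simp, by simp⟩, ?_⟩
      rw [grow, if_pos (by simp)]
    · refine ⟨w, Or.inr ⟨hw, by simp, by simp⟩, ?_⟩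
      rw [grow, if_neg (by simp), if_pos ((canCarry_one_iff R hw).1 (hc rfl))]

theorem ncard_markedLists (R : MarkingRule lam good) {n m : ℕ} (hm : 1 ≤ m) (hmn : m ≤ n) :
    (markedLists lam good n m).ncard =
      (markedLists lam good (n - m) m).ncard + (markedLists lam good (n - m) (m - 1)).ncard := by
  have hdisj : Disjoint (markedLists lam good (n - m) m) (markedLists lam good (n - m) (m - 1)) :=
    Set.disjoint_left.2 fun _ h₁ h₂ => by have := h₁.2.2.symm.trans h₂.2.2; omega
  rw [← Set.ncard_union_eq hdisj (markedLists_finite R _ _) (markedLists_finite R _ _)]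
  refine (Set.ncard_congr (fun w _ => grow lam m w) (fun w hw => grow_mem_markedLists R hm hmn hw)
    (fun w₁ w₂ hw₁ hw₂ h => ?_) (fun o ho => ?_)).symm
  · exact grow_injOn R m (hw₁.elim (·.1) (·.1)) (hw₂.elim (·.1) (·.1)) h
  · obtain ⟨w, hw, rfl⟩ := exists_grow_eq R hm ho
    exact ⟨w, hw, rfl⟩

theorem ncard_markedLists_eq {lam₁ lam₂ : ℕ} {good₁ good₂ : ℕ → Prop}
    (R₁ : MarkingRule lam₁ good₁) (R₂ : MarkingRule lam₂ good₂) (n m : ℕ) :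
    (markedLists lam₁ good₁ n m).ncard = (markedLists lam₂ good₂ n m).ncard := by
  induction n using Nat.strong_induction_on generalizing m with
  | _ n ih =>
  rcases Nat.eq_zero_or_pos m with rfl | hm
  · rw [markedLists_zero_right, markedLists_zero_right]
  rcases lt_or_ge n m with h | h
  · rw [markedLists_eq_empty_of_lt R₁ h, markedLists_eq_empty_of_lt R₂ h]
  · rw [ncard_markedLists R₁ hm h, ncard_markedLists R₂ hm h, ih (n - m) (by omega),
      ih (n - m) (by omega)]

end Recurrence

section Encoding

variable {lam : ℕ}

theorem isLamPartition_iff {l : List ℕ} :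
    IsLamPartition lam l ↔ l.IsChain (fun a b => a + lam ≤ b) ∧ ∀ i ∈ l, 0 < i :=
  Iff.rfl

theorem IsGood.one_lt {a : ℕ} (h : IsGood lam a) : 1 < a := by
  unfold IsGood at h
  split_ifs at h <;> omega

theorem mem_leadingParts {a : ℕ} {l : List ℕ} :
    a ∈ leadingParts lam l ↔ a ∈ blockStarts lam l ∧ IsGood lam a := by
  unfold leadingParts IsGood
  split_ifs with h
  · subst h
    simp
  · simp

theorem blockStartsAux_subset (p : ℕ) (l : List ℕ) : blockStartsAux lam p l ⊆ l := by
  induction l generalizing p with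
  | nil => simp [blockStartsAux]
  | cons a t ih =>
    intro x hx
    simp only [blockStartsAux, List.mem_append] at hx
    rcases hx with hx | hx
    · split_ifs at hx <;> simp_all
    · exact List.mem_cons_of_mem _ (ih a hx)

theorem blockStarts_subset (l : List ℕ) : blockStarts lam l ⊆ l := by
  obtain _ | ⟨a, t⟩ := l
  · simp [blockStarts]
  · exact List.cons_subset_cons a (blockStartsAux_subset a t)

theorem mem_blockStartsAux_cons_self {p a : ℕ} {l : List ℕ} (hl : ∀ y ∈ l, a < y) :
    a ∈ blockStartsAux lam p (a :: l) ↔ p + lam < a := by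
  have : a ∉ blockStartsAux lam a l := fun h => lt_irrefl a (hl a (blockStartsAux_subset a l h))
  simp only [blockStartsAux, List.mem_append]
  split_ifs <;> simp_all

theorem mem_blockStartsAux_cons_of_lt {p a x : ℕ} {l : List ℕ} (hx : a < x) :
    x ∈ blockStartsAux lam p (a :: l) ↔ x ∈ blockStartsAux lam a l := by
  simp only [blockStartsAux, List.mem_append]
  split_ifs <;> simp [hx.ne']

theorem lt_of_isChain_cons (hlam : 0 < lam) {a : ℕ} {l : List ℕ}
    (h : (a :: l).IsChain (fun a b => a + lam ≤ b)) : ∀ y ∈ l, a < y := fun _ hy =>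
  (h.imp fun _ _ h => by omega).rel_cons hy

theorem Admissible.nodup {good : ℕ → Prop} {b : ℕ} {w : List (ℕ × Bool)} (hlam : 0 < lam)
    (hw : Admissible lam good b w) : (w.map Prod.fst).Nodup := by
  induction w generalizing b with
  | nil => simp
  | cons x t ih =>
    obtain ⟨a, mk⟩ := x
    refine List.nodup_cons.2 ⟨fun ha => ?_, ih hw.2.2⟩
    obtain ⟨y, hy, rfl⟩ := List.mem_map.1 ha
    have := hw.2.2.le_of_mem y hy
    omega

theorem admissible_add_iff {good : ℕ → Prop} (hlam : 0 < lam) (p : ℕ) (w : List (ℕ × Bool)) :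
    Admissible lam good (p + lam) w ↔
      (p :: w.map Prod.fst).IsChain (fun a b => a + lam ≤ b) ∧
        ∀ x ∈ w, x.2 = true → good x.1 ∧ x.1 ∈ blockStartsAux lam p (w.map Prod.fst) := by
  induction w generalizing p with
  | nil => simp [Admissible]
  | cons x t ih =>
    obtain ⟨a, mk⟩ := x
    rw [admissible_cons, ih a, List.map_cons, List.isChain_cons_cons, List.forall_mem_cons]
    have hlt := @lt_of_isChain_cons lam hlam a (t.map Prod.fst)
    constructor
    · rintro ⟨hpa, hmk, hc, ht⟩
      refine ⟨⟨hpa, hc⟩, fun h => ⟨(hmk h).2, (mem_blockStartsAux_cons_self (hlt hc)).2 (hmk h).1⟩,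
        fun x hx h => ⟨(ht x hx h).1, ?_⟩⟩
      rw [mem_blockStartsAux_cons_of_lt (hlt hc _ (List.mem_map_of_mem hx))]
      exact (ht x hx h).2
    · rintro ⟨⟨hpa, hc⟩, hmk, ht⟩
      refine ⟨hpa, fun h => ⟨(mem_blockStartsAux_cons_self (hlt hc)).1 (hmk h).2, (hmk h).1⟩, hc,
        fun x hx h => ⟨(ht x hx h).1, ?_⟩⟩
      rw [← mem_blockStartsAux_cons_of_lt (hlt hc _ (List.mem_map_of_mem hx))]
      exact (ht x hx h).2

theorem admissible_one_iff (hlam : 0 < lam) (w : List (ℕ × Bool)) :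
    Admissible lam (IsGood lam) 1 w ↔
      IsLamPartition lam (w.map Prod.fst) ∧
        ∀ x ∈ w, x.2 = true → x.1 ∈ leadingParts lam (w.map Prod.fst) := by
  obtain _ | ⟨⟨a, mk⟩, t⟩ := w
  · simp [Admissible, isLamPartition_iff]
  rw [admissible_cons, admissible_add_iff hlam a, isLamPartition_iff, List.map_cons,
    List.forall_mem_cons, List.forall_mem_cons]
  simp only [mem_leadingParts, blockStarts, List.mem_cons]
  have hlt := @lt_of_isChain_cons lam hlam a (t.map Prod.fst)
  constructor
  · rintro ⟨ha, hmk, hc, ht⟩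
    exact ⟨⟨hc, ha, fun y hy => by have := hlt hc y hy; omega⟩, fun h => ⟨by simp, (hmk h).2⟩,
      fun x hx h => ⟨Or.inr (ht x hx h).2, (ht x hx h).1⟩⟩
  · rintro ⟨⟨hc, ha, -⟩, hmk, ht⟩
    refine ⟨ha, fun h => ⟨(hmk h).2.one_lt, (hmk h).2⟩, hc, fun x hx h => ⟨(ht x hx h).2, ?_⟩⟩
    exact (ht x hx h).1.resolve_left (hlt hc _ (List.mem_map_of_mem hx)).ne'

def encode (p : List ℕ × Finset ℕ) : List (ℕ × Bool) :=
  p.1.map fun a => (a, decide (a ∈ p.2))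

def decode (w : List (ℕ × Bool)) : List ℕ × Finset ℕ :=
  (w.map Prod.fst, ((w.filter (·.2)).map Prod.fst).toFinset)

theorem map_fst_encode (p : List ℕ × Finset ℕ) : (encode p).map Prod.fst = p.1 := by
  simp [encode, Function.comp_def]

theorem encode_decode {w : List (ℕ × Bool)} (hw : (w.map Prod.fst).Nodup) :
    encode (decode w) = w := by
  rw [encode, decode, List.map_map]
  refine (List.map_congr_left fun x hx => ?_).trans (List.map_id w)
  have : (x.1, true) ∈ w ↔ x.2 = true :=
    ⟨fun h => congrArg Prod.snd (List.inj_on_of_nodup_map hw h hx rfl).symm,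
      fun h => (Prod.ext rfl h : x = (x.1, true)) ▸ hx⟩
  simp [this]

theorem subset_of_isMarked {p : List ℕ × Finset ℕ} (hp : IsMarked lam p) : ∀ a ∈ p.2, a ∈ p.1 :=
  fun a ha => blockStarts_subset _ (mem_leadingParts.1 (hp.2 a ha)).1

theorem admissible_encode (hlam : 0 < lam) {p : List ℕ × Finset ℕ} (hp : IsMarked lam p) :
    Admissible lam (IsGood lam) 1 (encode p) := by
  rw [admissible_one_iff hlam, map_fst_encode]
  refine ⟨hp.1, fun x hx hx2 => ?_⟩
  obtain ⟨a, -, rfl⟩ := List.mem_map.1 hx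
  exact hp.2 a (by simpa using hx2)

theorem markedLength_encode (hlam : 0 < lam) {p : List ℕ × Finset ℕ} (hp : IsMarked lam p) :
    markedLength (encode p) = p.1.length + p.2.card := by
  have hl : p.1.Nodup := by simpa [map_fst_encode] using (admissible_encode hlam hp).nodup hlam
  rw [markedLength, marks, encode, List.length_map, List.countP_map,
    List.countP_eq_length_filter, ← List.toFinset_card_of_nodup (hl.filter _)]
  congr 2
  ext a
  simpa using subset_of_isMarked hp a

theorem isMarked_decode (hlam : 0 < lam) {w : List (ℕ × Bool)}
    (hw : Admissible lam (IsGood lam) 1 w) : IsMarked lam (decode w) := by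
  obtain ⟨hpart, hlead⟩ := (admissible_one_iff hlam w).1 hw
  refine ⟨hpart, fun a ha => ?_⟩
  obtain ⟨y, hy, rfl⟩ := List.mem_map.1 (List.mem_toFinset.1 ha)
  exact hlead y (List.mem_filter.1 hy).1 (by simpa using (List.mem_filter.1 hy).2)

theorem encode_injOn :
    Set.InjOn encode {p : List ℕ × Finset ℕ | ∀ a ∈ p.2, a ∈ p.1} := by
  rintro ⟨l₁, J₁⟩ h₁ ⟨l₂, J₂⟩ h₂ h
  obtain rfl : l₁ = l₂ := by simpa [map_fst_encode] using congrArg (List.map Prod.fst) h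
  have hJ := List.map_inj_left.1 h
  congr 1
  ext a
  by_cases ha : a ∈ l₁
  · simpa using hJ a ha
  · exact iff_of_false (fun h => ha (h₁ a h)) (fun h => ha (h₂ a h))

theorem ncard_isMarked (hlam : 0 < lam) (n m : ℕ) :
    {p : List ℕ × Finset ℕ | IsMarked lam p ∧ p.1.sum = n ∧ p.1.length + p.2.card = m}.ncard =
      (markedLists lam (IsGood lam) n m).ncard := by
  refine Set.ncard_congr (fun p _ => encode p) ?_ ?_ ?_
  · rintro p ⟨hp, rfl, rfl⟩
    exact ⟨admissible_encode hlam hp, by simp [partSum, map_fst_encode],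
      markedLength_encode hlam hp⟩
  · exact fun p₁ p₂ h₁ h₂ h => encode_injOn (subset_of_isMarked h₁.1) (subset_of_isMarked h₂.1) h
  · rintro w ⟨hw, rfl, rfl⟩
    have hp := isMarked_decode hlam hw
    refine ⟨decode w, ⟨hp, rfl, ?_⟩, encode_decode (hw.nodup hlam)⟩
    rw [← markedLength_encode hlam hp, encode_decode (hw.nodup hlam)]

end Encoding

end MarkedPartition

theorem stmt_17_general (n : ℕ) (m : ℕ) :
    {p : List ℕ × Finset ℕ | IsMarked 3 p ∧ p.1.sum = n ∧ p.1.length + p.2.card = m}.ncard =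
      {p : List ℕ × Finset ℕ | IsMarked 2 p ∧ p.1.sum = n ∧ p.1.length + p.2.card = m}.ncard := by
  rw [MarkedPartition.ncard_isMarked three_pos, MarkedPartition.ncard_isMarked two_pos]
  exact MarkedPartition.ncard_markedLists_eq MarkedPartition.markingRule_three
    MarkedPartition.markingRule_two n m

/-- for every `n ≥ 1` and every `m`, the number of marked 3-partitions of
`n` of length `m` equals the number of marked 2-partitions of `n` of length `m`. -/
theorem stmt_17 (n : ℕ) (hn : 1 ≤ n) (m : ℕ) :
    {p : List ℕ × Finset ℕ | IsMarked 3 p ∧ p.1.sum = n ∧ p.1.length + p.2.card = m}.ncard =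
      {p : List ℕ × Finset ℕ | IsMarked 2 p ∧ p.1.sum = n ∧ p.1.length + p.2.card = m}.ncard :=
  stmt_17_general n m
end
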